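/- arXiv:1408.3303 — 7 statements merged into one kernel-verified Lean document; each statement's English description precedes it below -/
import Mathlib

section
/- An s-path of length d (a k-uniform hypergraph on s+d(k-s) vertices v_1,...,v_{s+d(k-s)} whose edges are {v_{1+j(k-s)},...,v_{s+(j+1)(k-s)}} for j=0,...,d-1) is odd-bipartite whenever k is even and k/2 ≤ s ≤ k-1, i.e., there is a bipartition of its vertex set such that every edge contains an odd number of vertices in each part. -/
/-- Every half-open interval of length `k > 0` contains exactly one multiple of `k`. -/
lemma Ico_filter_dvd_eq_singleton (a k : ℕ) (hk : 0 < k) :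
    (Finset.Ico a (a + k)).filter (k ∣ ·) = {k * ((a + k - 1) / k)} := by
  have hdm := Nat.div_add_mod (a + k - 1) k
  have hml : (a + k - 1) % k < k := Nat.mod_lt _ hk
  set c := (a + k - 1) / k with hc
  have h1 : a ≤ k * c := by omega
  have h2 : k * c < a + k := by omega
  ext x
  simp only [Finset.mem_filter, Finset.mem_Ico, Finset.mem_singleton]
  constructor
  · rintro ⟨⟨hx1, hx2⟩, m, rfl⟩
    have hmc : m < c + 1 := Nat.lt_of_mul_lt_mul_left (a := k) (by nlinarith)
    have hcm : c < m + 1 := Nat.lt_of_mul_lt_mul_left (a := k) (by nlinarith)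
    have : m = c := by omega
    rw [this]
  · rintro rfl
    exact ⟨⟨h1, h2⟩, ⟨c, rfl⟩⟩

/-- An `s`-path of length `d` (edges `{j(k-s), ..., j(k-s)+k-1}` for `j < d`, with
vertices indexed from `0`) is odd-bipartite whenever `k` is even and `k/2 ≤ s ≤ k-1`. -/
theorem stmt_0 (k s d : ℕ) (hk : Even k) (hk2 : 2 ≤ k) (hs1 : k / 2 ≤ s) (hs2 : s ≤ k - 1) :
    ∃ S : Finset ℕ,
      ∀ j < d,
        Odd ((Finset.Ico (j * (k - s)) (j * (k - s) + k) ∩ S).card) ∧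
        Odd ((Finset.Ico (j * (k - s)) (j * (k - s) + k) \ S).card) := by
  have hkpos : 0 < k := by omega
  set N := d * (k - s) + k with hN
  refine ⟨(Finset.range N).filter (k ∣ ·), fun j hj => ?_⟩
  set a := j * (k - s) with ha
  have hsub : a + k ≤ N := by
    have : j * (k - s) ≤ d * (k - s) := Nat.mul_le_mul_right _ (le_of_lt hj)
    omega
  have hinter : Finset.Ico a (a + k) ∩ (Finset.range N).filter (k ∣ ·)
      = (Finset.Ico a (a + k)).filter (k ∣ ·) := by
    ext x
    simp only [Finset.mem_inter, Finset.mem_filter, Finset.mem_Ico, Finset.mem_range]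
    constructor
    · rintro ⟨h1, _, h3⟩; exact ⟨h1, h3⟩
    · rintro ⟨h1, h3⟩; exact ⟨h1, by omega, h3⟩
  have hcard1 : (Finset.Ico a (a + k) ∩ (Finset.range N).filter (k ∣ ·)).card = 1 := by
    rw [hinter, Ico_filter_dvd_eq_singleton a k hkpos, Finset.card_singleton]
  have hcard2 := Finset.card_inter_add_card_sdiff (Finset.Ico a (a + k))
    ((Finset.range N).filter (k ∣ ·))
  rw [Nat.card_Ico] at hcard2
  have hsd : (Finset.Ico a (a + k) \ (Finset.range N).filter (k ∣ ·)).card = k - 1 := by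
    omega
  obtain ⟨m, hm⟩ := hk
  exact ⟨hcard1 ▸ odd_one, hsd ▸ ⟨m - 1, by omega⟩⟩
end

section
/- Let k be even and G a simple connected graph. The k-uniform hypergraph G^{k,k/2} is odd-bipartite if and only if G is bipartite. Equivalently, G^{k,k/2} is non-odd-bipartite if and only if G is non-bipartite. -/
/-- For even `k`, the hypergraph `G^{k,k/2}` (vertex `v` blown up into `{v} × range (k/2)`,
edges being unions of the blow-ups of adjacent vertices) is odd-bipartite iff `G` is
bipartite. -/
theorem stmt_2 {V : Type*} [Fintype V] [DecidableEq V] (G : SimpleGraph V)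
    (hG : G.Connected) (k : ℕ) (hk : Even k) (hk2 : 2 ≤ k) :
    (∃ S : Finset (V × ℕ),
      ∀ u v : V, G.Adj u v →
        Odd (((({u} : Finset V) ×ˢ Finset.range (k / 2) ∪
              ({v} : Finset V) ×ˢ Finset.range (k / 2)) ∩ S).card) ∧
        Odd (((({u} : Finset V) ×ˢ Finset.range (k / 2) ∪
              ({v} : Finset V) ×ˢ Finset.range (k / 2)) \ S).card)) ↔
    (∃ c : V → Bool, ∀ u v : V, G.Adj u v → c u ≠ c v) := by
  set m := k / 2 with hmdef
  have hm : 1 ≤ m := Nat.one_le_div_iff (by norm_num) |>.mpr hk2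
  have hdisj : ∀ u v : V, u ≠ v →
      Disjoint (({u} : Finset V) ×ˢ Finset.range m) (({v} : Finset V) ×ˢ Finset.range m) := by
    intro u v huv
    rw [Finset.disjoint_left]
    rintro ⟨a, b⟩ ha hb
    simp only [Finset.mem_product, Finset.mem_singleton] at ha hb
    exact huv (ha.1 ▸ hb.1 ▸ rfl)
  constructor
  · rintro ⟨S, hS⟩
    refine ⟨fun v => decide (Odd (((({v} : Finset V) ×ˢ Finset.range m) ∩ S).card)), ?_⟩
    intro u v huv
    obtain ⟨h1, _⟩ := hS u v huv
    have hsplit : ((({u} : Finset V) ×ˢ Finset.range m ∪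
        ({v} : Finset V) ×ˢ Finset.range m) ∩ S).card =
        ((({u} : Finset V) ×ˢ Finset.range m) ∩ S).card +
        ((({v} : Finset V) ×ˢ Finset.range m) ∩ S).card := by
      rw [Finset.union_inter_distrib_right,
        Finset.card_union_of_disjoint
          ((hdisj u v huv.ne).mono Finset.inter_subset_left Finset.inter_subset_left)]
    rw [hsplit, Nat.odd_add] at h1
    simp only [ne_eq, decide_eq_decide]
    rw [Nat.not_odd_iff_even.symm] at h1
    tauto
  · rintro ⟨c, hc⟩
    refine ⟨(Finset.univ.filter fun v => c v = true) ×ˢ ({0} : Finset ℕ), ?_⟩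
    intro u v huv
    have hne := huv.ne
    have hcuv := hc u v huv
    set A := ({u} : Finset V) ×ˢ Finset.range m with hA
    set B := ({v} : Finset V) ×ˢ Finset.range m with hB
    set S := (Finset.univ.filter fun v => c v = true) ×ˢ ({0} : Finset ℕ) with hSdef
    have hcardAB : (A ∪ B).card = 2 * m := by
      rw [Finset.card_union_of_disjoint (hdisj u v hne)]
      simp [hA, hB, two_mul]
    have hw : ∃ w : V, c w = true ∧ (A ∪ B) ∩ S = {(w, 0)} := by
      rcases Bool.eq_false_or_eq_true (c u) with hcu | hcu
      swap
      · have hcv : c v = true := by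
          cases hv : c v
          · exact absurd (hcu.trans hv.symm) hcuv
          · rfl
        refine ⟨v, hcv, ?_⟩
        ext ⟨a, b⟩
        simp only [Finset.mem_inter, Finset.mem_union, hA, hB, hSdef, Finset.mem_product,
          Finset.mem_singleton, Finset.mem_range, Finset.mem_filter, Finset.mem_univ,
          true_and, Prod.mk.injEq]
        constructor
        · rintro ⟨hab, hc1, hb0⟩
          rcases hab with ⟨ha, _⟩ | ⟨ha, _⟩
          · rw [ha, hcu] at hc1; exact absurd hc1 (by simp)
          · exact ⟨ha, hb0⟩
        · rintro ⟨ha, hb⟩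
          exact ⟨Or.inr ⟨ha, hb ▸ hm⟩, ha ▸ hcv, hb⟩
      · refine ⟨u, hcu, ?_⟩
        have hcv : c v = false := by
          cases hv : c v
          · rfl
          · exact absurd (hcu.trans hv.symm) hcuv
        ext ⟨a, b⟩
        simp only [Finset.mem_inter, Finset.mem_union, hA, hB, hSdef, Finset.mem_product,
          Finset.mem_singleton, Finset.mem_range, Finset.mem_filter, Finset.mem_univ,
          true_and, Prod.mk.injEq]
        constructor
        · rintro ⟨hab, hc1, hb0⟩
          rcases hab with ⟨ha, _⟩ | ⟨ha, _⟩
          · exact ⟨ha, hb0⟩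
          · rw [ha, hcv] at hc1; exact absurd hc1 (by simp)
        · rintro ⟨ha, hb⟩
          exact ⟨Or.inl ⟨ha, hb ▸ hm⟩, ha ▸ hcu, hb⟩
    obtain ⟨w, _, hWeq⟩ := hw
    have h1 : ((A ∪ B) ∩ S).card = 1 := by rw [hWeq]; simp
    have h2 : ((A ∪ B) \ S).card = 2 * m - 1 := by
      have := Finset.card_inter_add_card_sdiff (A ∪ B) S
      omega
    refine ⟨by rw [h1]; exact odd_one, ?_⟩
    rw [h2, Nat.odd_iff]
    omega
end

section
/- For each n ≥ 1, let C_{2n+1}+e denote the graph obtained from the odd cycle C_{2n+1} by attaching a pendant edge at one vertex. Then the adjacency spectral radii ρ(A(C_{2n+1}+e)) form a strictly decreasing sequence converging to τ^{3/2} = sqrt(2 + sqrt 5), where τ = (1+√5)/2 is the golden ratio. -/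
open Matrix

noncomputable def specRad {m : Type*} [Fintype m] [DecidableEq m]
    (M : Matrix m m ℝ) : ℝ :=
  sSup {r : ℝ | ∃ μ ∈ spectrum ℂ (M.map (Complex.ofReal)), r = ‖μ‖}

/-- The base relation for the graph `C_{2n+1} + e`: vertex `0` is the pendant vertex
attached at vertex `1`, and vertices `1, ..., 2n+1` form the cycle. -/
def cpeRel (n a b : ℕ) : Prop :=
  (a = 0 ∧ b = 1) ∨ (1 ≤ a ∧ a ≤ 2 * n ∧ b = a + 1) ∨ (a = 2 * n + 1 ∧ b = 1)

instance (n a b : ℕ) : Decidable (cpeRel n a b) := by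
  unfold cpeRel; infer_instance

/-- The graph `C_{2n+1} + e`: the odd cycle `C_{2n+1}` with a pendant edge. -/
def cpe (n : ℕ) : SimpleGraph (Fin (2 * n + 2)) where
  Adj a b := a ≠ b ∧ (cpeRel n a.val b.val ∨ cpeRel n b.val a.val)
  symm := by
    constructor
    rintro a b ⟨h1, h2⟩
    exact ⟨h1.symm, h2.symm⟩
  loopless := by
    constructor
    rintro a ⟨h, -⟩
    exact h rfl

instance (n : ℕ) : DecidableRel (cpe n).Adj :=
  fun a b => inferInstanceAs (Decidable (_ ∧ _))

/-!
Write the eigenvalue as `λ = t + t⁻¹` with `t > 1`. On the cycle, the vector with entry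
`t ^ k + t ^ (2n+1-k)` at vertex `k + 1` satisfies `λ x_i = Σ_{j ∼ i} x_j` at every cycle vertex
except the attachment vertex `1`, and giving the pendant vertex the value `x_1 / λ` fixes it there.
What remains, the equation at vertex `1`, is `t^(2n+1) (t⁴ - t² - 1) = t⁴ + t² - 1`; it has a root
`t_n > √φ`, and the resulting eigenvector is positive, so `λ` is the spectral radius. Since
`t^(2n+1)` grows with `n` while `(t⁴ + t² - 1) / (t⁴ - t² - 1)` decreases in `t`, the roots `t_n`
decrease strictly to `√φ`, the positive root of `t⁴ - t² - 1`; and `√φ + 1/√φ = φ^{3/2}`.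
-/

open Real goldenRatio Filter Topology

section SpectralRadius

variable {m : Type*} [Fintype m] [DecidableEq m]

theorem Matrix.mem_spectrum_iff_exists_mulVec_eq_smul (M : Matrix m m ℂ) (μ : ℂ) :
    μ ∈ spectrum ℂ M ↔ ∃ w : m → ℂ, w ≠ 0 ∧ M *ᵥ w = μ • w := by
  simp only [← Matrix.spectrum_toLin', ← Module.End.hasEigenvalue_iff_mem_spectrum,
    Module.End.hasEigenvalue_iff, Submodule.ne_bot_iff, Module.End.mem_eigenspace_iff,
    Matrix.toLin'_apply]
  exact ⟨fun ⟨w, hw, hw0⟩ => ⟨w, hw0, hw⟩, fun ⟨w, hw0, hw⟩ => ⟨w, hw, hw0⟩⟩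

variable {A : Matrix m m ℝ} {v : m → ℝ} {lam : ℝ}

/-- Collatz–Wielandt bound: compare an eigenvector `w` with `v` at an index maximising
`‖w i‖ / v i`. -/
theorem norm_le_of_mem_spectrum_of_pos_eigenvector (hA : ∀ i j, 0 ≤ A i j)
    (hv : ∀ i, 0 < v i) (hAv : A *ᵥ v = lam • v) {μ : ℂ}
    (hμ : μ ∈ spectrum ℂ (A.map Complex.ofReal)) : ‖μ‖ ≤ lam := by
  obtain ⟨w, hw0, hw⟩ := (mem_spectrum_iff_exists_mulVec_eq_smul _ μ).1 hμ
  obtain ⟨j₀, hj₀⟩ := Function.ne_iff.1 hw0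
  obtain ⟨i, -, hi⟩ := Finset.exists_max_image Finset.univ (fun j => ‖w j‖ / v j)
    ⟨j₀, Finset.mem_univ _⟩
  set c := ‖w i‖ / v i
  have hwc : ∀ j, ‖w j‖ ≤ c * v j := fun j =>
    (div_le_iff₀ (hv j)).1 (hi j (Finset.mem_univ _))
  have hc : 0 < c := pos_of_mul_pos_left ((norm_pos_iff.2 hj₀).trans_le (hwc j₀)) (hv j₀).le
  have hwi : ‖w i‖ = c * v i := by simp only [c, div_mul_cancel₀ _ (hv i).ne']
  have hrow : ∑ j, A i j * v j = lam * v i := by simpa [mulVec, dotProduct] using congrFun hAv i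
  have key : ‖μ‖ * ‖w i‖ ≤ lam * ‖w i‖ :=
    calc ‖μ‖ * ‖w i‖ = ‖∑ j, (A i j : ℂ) * w j‖ := by
          simpa [mulVec, dotProduct] using congrArg norm (congrFun hw i).symm
      _ ≤ ∑ j, A i j * ‖w j‖ := (norm_sum_le _ _).trans_eq <| Finset.sum_congr rfl fun j _ => by
          rw [norm_mul, Complex.norm_real, Real.norm_of_nonneg (hA i j)]
      _ ≤ ∑ j, A i j * (c * v j) :=
          Finset.sum_le_sum fun j _ => mul_le_mul_of_nonneg_left (hwc j) (hA i j)
      _ = lam * ‖w i‖ := by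
          simp_rw [mul_left_comm _ c, ← Finset.mul_sum, hrow, hwi]; ring
  exact le_of_mul_le_mul_right key (hwi ▸ mul_pos hc (hv i))

theorem specRad_eq_of_pos_eigenvector [Nonempty m] (hA : ∀ i j, 0 ≤ A i j)
    (hv : ∀ i, 0 < v i) (hAv : A *ᵥ v = lam • v) : specRad A = lam := by
  have hlam : (lam : ℂ) ∈ spectrum ℂ (A.map Complex.ofReal) := by
    refine (mem_spectrum_iff_exists_mulVec_eq_smul _ _).2
      ⟨Complex.ofReal ∘ v, fun h => (hv (Classical.arbitrary m)).ne' ?_, funext fun i => ?_⟩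
    · simpa using congrFun h (Classical.arbitrary m)
    · exact (Complex.ofRealHom.map_mulVec A v i).symm.trans (by simp [hAv])
  have hle := fun μ (hμ : μ ∈ _) => norm_le_of_mem_spectrum_of_pos_eigenvector hA hv hAv hμ
  have hlam_nonneg : 0 ≤ lam := (norm_nonneg _).trans (hle _ hlam)
  refine IsGreatest.csSup_eq ⟨⟨lam, hlam, ?_⟩, ?_⟩
  · rw [Complex.norm_real, Real.norm_of_nonneg hlam_nonneg]
  · rintro r ⟨μ, hμ, rfl⟩
    exact hle μ hμ

end SpectralRadius

theorem one_lt_sqrt_goldenRatio : 1 < √φ :=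
  (Real.lt_sqrt zero_le_one).2 (by simpa using one_lt_goldenRatio)

theorem pow_four_sub_sq_sub_one_pos {t : ℝ} (ht : √φ < t) : 0 < t ^ 4 - t ^ 2 - 1 := by
  have hφ : φ < t ^ 2 := (Real.sqrt_lt' (one_pos.trans (one_lt_sqrt_goldenRatio.trans ht))).1 ht
  have hψ : ψ < t ^ 2 := goldenConj_neg.trans_le (sq_nonneg t)
  have hfac : t ^ 4 - t ^ 2 - 1 = (t ^ 2 - φ) * (t ^ 2 - ψ) := by
    linear_combination (-t ^ 2) * goldenRatio_add_goldenConj - goldenRatio_mul_goldenConj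
  rw [hfac]
  exact mul_pos (sub_pos.2 hφ) (sub_pos.2 hψ)

/-- With `λ = t + t⁻¹`, the equation `cpeChar n t = 0` is the eigenvalue equation of
`C_{2n+1} + e` at the vertex carrying the pendant edge. -/
def cpeChar (n : ℕ) (t : ℝ) : ℝ :=
  t ^ (2 * n + 1) * (t ^ 4 - t ^ 2 - 1) - (t ^ 4 + t ^ 2 - 1)

theorem cpeChar_add (m k : ℕ) (t : ℝ) :
    cpeChar (m + k) t = t ^ (2 * k) * cpeChar m t + (t ^ (2 * k) - 1) * (t ^ 4 + t ^ 2 - 1) := by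
  simp only [cpeChar, mul_add, add_right_comm _ (2 * k), pow_add]
  ring

theorem cpeChar_sqrt_goldenRatio_neg (n : ℕ) : cpeChar n √φ < 0 := by
  have h2 : √φ ^ 2 = φ := Real.sq_sqrt goldenRatio_pos.le
  have h4 : √φ ^ 4 = φ + 1 := by rw [show 4 = 2 * 2 by rfl, pow_mul, h2, goldenRatio_sq]
  simp only [cpeChar, h2, h4]
  linarith [goldenRatio_pos]

theorem cpeChar_two_pos (n : ℕ) : 0 < cpeChar n 2 := by
  have h : (2 : ℝ) ≤ 2 ^ (2 * n + 1) := le_self_pow₀ one_le_two (by omega)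
  simp only [cpeChar]
  linarith

theorem cpeChar_pos_of_lt {n : ℕ} {a b : ℝ} (ha : √φ < a) (hab : a < b)
    (h : 0 ≤ cpeChar n a) : 0 < cpeChar n b := by
  have ha0 : 0 < a := one_pos.trans (one_lt_sqrt_goldenRatio.trans ha)
  have hqa := pow_four_sub_sq_sub_one_pos ha
  have hqb := pow_four_sub_sq_sub_one_pos (ha.trans hab)
  have hpow : a ^ (2 * n + 1) ≤ b ^ (2 * n + 1) := pow_le_pow_left₀ ha0.le hab.le _
  have hcross :
      (a ^ 4 + a ^ 2 - 1) * (b ^ 4 - b ^ 2 - 1) - (b ^ 4 + b ^ 2 - 1) * (a ^ 4 - a ^ 2 - 1) =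
        2 * (b ^ 2 - a ^ 2) * (a ^ 2 * b ^ 2 + 1) := by ring
  have hsq : 0 < b ^ 2 - a ^ 2 := by nlinarith
  unfold cpeChar at h ⊢
  nlinarith [mul_le_mul_of_nonneg_right hpow (mul_pos hqa hqb).le, mul_nonneg h hqb.le,
    mul_pos hsq (by positivity : (0 : ℝ) < a ^ 2 * b ^ 2 + 1)]

theorem exists_cpeChar_eq_zero (n : ℕ) : ∃ t, √φ < t ∧ cpeChar n t = 0 := by
  have hlt : √φ < 2 := (Real.sqrt_lt' two_pos).2 (by linarith [goldenRatio_lt_two])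
  have hcont : Continuous (cpeChar n) := by unfold cpeChar; fun_prop
  obtain ⟨t, ht, hroot⟩ := intermediate_value_Ioo hlt.le hcont.continuousOn
    ⟨cpeChar_sqrt_goldenRatio_neg n, cpeChar_two_pos n⟩
  exact ⟨t, ht.1, hroot⟩

/-- Unique, by `cpeChar_pos_of_lt`. -/
noncomputable def cpeRoot (n : ℕ) : ℝ := (exists_cpeChar_eq_zero n).choose

theorem sqrt_goldenRatio_lt_cpeRoot (n : ℕ) : √φ < cpeRoot n :=
  (exists_cpeChar_eq_zero n).choose_spec.1

theorem cpeChar_cpeRoot (n : ℕ) : cpeChar n (cpeRoot n) = 0 :=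
  (exists_cpeChar_eq_zero n).choose_spec.2

theorem one_lt_cpeRoot (n : ℕ) : 1 < cpeRoot n :=
  one_lt_sqrt_goldenRatio.trans (sqrt_goldenRatio_lt_cpeRoot n)

theorem cpeRoot_lt_of_cpeChar_pos {n : ℕ} {b : ℝ} (hb : √φ < b) (h : 0 < cpeChar n b) :
    cpeRoot n < b := by
  by_contra! hle
  rcases hle.eq_or_lt with rfl | hlt
  · exact h.ne' (cpeChar_cpeRoot n)
  · exact (cpeChar_pos_of_lt hb hlt h.le).ne' (cpeChar_cpeRoot n)

theorem cpeRoot_strictAnti : StrictAnti cpeRoot := by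
  intro m n hmn
  obtain ⟨k, rfl⟩ := Nat.exists_eq_add_of_lt hmn
  have ht := sqrt_goldenRatio_lt_cpeRoot m
  set t := cpeRoot m
  have hpow : 1 < t ^ (2 * (k + 1)) := one_lt_pow₀ (one_lt_cpeRoot m) (by omega)
  refine cpeRoot_lt_of_cpeChar_pos ht ?_
  rw [add_assoc, cpeChar_add, cpeChar_cpeRoot, mul_zero, zero_add]
  exact mul_pos (sub_pos.2 hpow) (by nlinarith [pow_four_sub_sq_sub_one_pos ht])

theorem tendsto_cpeRoot : Tendsto cpeRoot atTop (𝓝 √φ) := by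
  refine tendsto_order.2 ⟨fun a ha => .of_forall fun n => ha.trans (sqrt_goldenRatio_lt_cpeRoot n),
    fun b hb => ?_⟩
  have hb1 : 1 < b := one_lt_sqrt_goldenRatio.trans hb
  have hodd : Tendsto (fun n : ℕ => 2 * n + 1) atTop atTop :=
    tendsto_atTop_mono (fun n => show n ≤ 2 * n + 1 by omega) tendsto_id
  have hchar : Tendsto (fun n => cpeChar n b) atTop atTop :=
    tendsto_atTop_add_const_right _ _
      (((tendsto_pow_atTop_atTop_of_one_lt hb1).comp hodd).atTop_mul_const
        (pow_four_sub_sq_sub_one_pos hb))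
  filter_upwards [hchar.eventually_gt_atTop 0] with n hn
  exact cpeRoot_lt_of_cpeChar_pos hb hn

theorem add_inv_lt_add_inv {a b : ℝ} (ha : 1 ≤ a) (hab : a < b) : a + a⁻¹ < b + b⁻¹ := by
  have ha0 : 0 < a := one_pos.trans_le ha
  have hb0 : 0 < b := ha0.trans hab
  have : b + b⁻¹ - (a + a⁻¹) = (b - a) * (a * b - 1) / (a * b) := by field_simp; ring
  have : 0 < (b - a) * (a * b - 1) / (a * b) := by
    apply div_pos (mul_pos (sub_pos.2 hab) _) (mul_pos ha0 hb0)
    nlinarith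
  linarith

theorem sqrt_goldenRatio_add_inv : √φ + (√φ)⁻¹ = √(2 + √5) := by
  have hpos : 0 < √φ := Real.sqrt_pos.2 goldenRatio_pos
  have h2 : √φ ^ 2 = φ := Real.sq_sqrt goldenRatio_pos.le
  rw [← Real.sqrt_sq (by positivity : 0 ≤ √φ + (√φ)⁻¹)]
  congr 1
  rw [add_sq, mul_inv_cancel_right₀ hpos.ne', inv_pow, h2, inv_goldenRatio, goldenConj,
    goldenRatio]
  ring

/-- On the cycle `C_N`, numbered `0, …, N - 1`, the vector `k ↦ t ^ k + t ^ (N - k)` satisfies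
the eigenvalue equation for `t + t⁻¹` at every vertex except `0`. -/
def cycleCoord (N k : ℕ) (t : ℝ) : ℝ := t ^ k + t ^ (N - k)

theorem cycleCoord_pred_add_succ {N k : ℕ} {t : ℝ} (ht : t ≠ 0) (hk : 1 ≤ k) (hkN : k < N) :
    cycleCoord N (k - 1) t + cycleCoord N (k + 1) t = (t + t⁻¹) * cycleCoord N k t := by
  obtain ⟨a, rfl⟩ := Nat.exists_eq_add_of_le' hk
  obtain ⟨b, rfl⟩ := Nat.exists_eq_add_of_lt hkN
  simp only [cycleCoord, Nat.add_sub_cancel, show a + 1 + b + 1 - a = b + 2 by omega,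
    show a + 1 + b + 1 - (a + 1 + 1) = b by omega, show a + 1 + b + 1 - (a + 1) = b + 1 by omega]
  field_simp
  ring

theorem cycleCoord_pos (N k : ℕ) {t : ℝ} (ht : 0 < t) : 0 < cycleCoord N k t := by
  unfold cycleCoord; positivity

noncomputable def cpeVec (n : ℕ) (t : ℝ) (i : Fin (2 * n + 2)) : ℝ :=
  if (i : ℕ) = 0 then cycleCoord (2 * n + 1) 0 t / (t + t⁻¹) else cycleCoord (2 * n + 1) (i - 1) t

theorem cpeVec_pos (n : ℕ) {t : ℝ} (ht : 0 < t) (i : Fin (2 * n + 2)) : 0 < cpeVec n t i := by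
  unfold cpeVec
  split_ifs
  · exact div_pos (cycleCoord_pos _ _ ht) (by positivity)
  · exact cycleCoord_pos _ _ ht

theorem mem_neighborFinset_cpe {n : ℕ} {i j : Fin (2 * n + 2)} :
    j ∈ (cpe n).neighborFinset i ↔ (i : ℕ) ≠ j ∧ (cpeRel n i j ∨ cpeRel n j i) := by
  rw [SimpleGraph.mem_neighborFinset]
  exact and_congr_left' Fin.val_ne_iff.symm

theorem neighborFinset_cpe_zero (n : ℕ) :
    (cpe n).neighborFinset ⟨0, by omega⟩ = {⟨1, by omega⟩} := by
  ext j
  simp only [mem_neighborFinset_cpe, cpeRel, Finset.mem_singleton, Fin.ext_iff, true_and]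
  omega

theorem neighborFinset_cpe_one {n : ℕ} (hn : 1 ≤ n) :
    (cpe n).neighborFinset ⟨1, by omega⟩ =
      {⟨0, by omega⟩, ⟨2, by omega⟩, ⟨2 * n + 1, by omega⟩} := by
  ext j
  simp only [mem_neighborFinset_cpe, cpeRel, Finset.mem_insert, Finset.mem_singleton, Fin.ext_iff,
    and_true]
  omega

theorem neighborFinset_cpe_of_two_le {n i : ℕ} (hi : 2 ≤ i) (hin : i ≤ 2 * n) :
    (cpe n).neighborFinset ⟨i, by omega⟩ = {⟨i - 1, by omega⟩, ⟨i + 1, by omega⟩} := by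
  ext j
  simp only [mem_neighborFinset_cpe, cpeRel, Finset.mem_insert, Finset.mem_singleton, Fin.ext_iff]
  omega

theorem neighborFinset_cpe_last {n : ℕ} (hn : 1 ≤ n) :
    (cpe n).neighborFinset ⟨2 * n + 1, by omega⟩ = {⟨2 * n, by omega⟩, ⟨1, by omega⟩} := by
  ext j
  simp only [mem_neighborFinset_cpe, cpeRel, Finset.mem_insert, Finset.mem_singleton, Fin.ext_iff,
    true_and]
  omega

theorem cpe_adjMatrix_mulVec_cpeVec {n : ℕ} (hn : 1 ≤ n) {t : ℝ} (ht : 0 < t)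
    (hroot : cpeChar n t = 0) :
    (cpe n).adjMatrix ℝ *ᵥ cpeVec n t = (t + t⁻¹) • cpeVec n t := by
  have hlam : t + t⁻¹ ≠ 0 := by positivity
  funext ⟨i, hi⟩
  rw [SimpleGraph.adjMatrix_mulVec_apply, Pi.smul_apply, smul_eq_mul]
  rcases (by omega : i = 0 ∨ i = 1 ∨ (2 ≤ i ∧ i ≤ 2 * n) ∨ i = 2 * n + 1)
    with rfl | rfl | ⟨hi2, hin⟩ | rfl
  · rw [neighborFinset_cpe_zero, Finset.sum_singleton]
    simp [cpeVec, mul_div_cancel₀ _ hlam]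
  · rw [neighborFinset_cpe_one hn, Finset.sum_insert (by simp), Finset.sum_insert (by simp),
      Finset.sum_singleton]
    simp only [cpeVec, cycleCoord, cpeChar] at hroot ⊢
    simp only [Nat.one_ne_zero, if_false, if_true, show (2 : ℕ) ≠ 0 by omega,
      show 2 * n + 1 ≠ 0 by omega, Nat.sub_zero, Nat.sub_self, pow_zero, pow_one,
      show 2 * n + 1 - 1 = 2 * n by omega, show 2 * n + 1 - 2 * n = 1 by omega]
    rw [pow_succ] at hroot ⊢
    field_simp
    linear_combination (-1 : ℝ) * hroot
  · rw [neighborFinset_cpe_of_two_le hi2 hin, Finset.sum_pair (by rw [Ne, Fin.mk.injEq]; omega)]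
    obtain ⟨k, rfl⟩ : ∃ k, i = k + 1 := ⟨i - 1, by omega⟩
    simp only [cpeVec, Nat.add_sub_cancel, show k ≠ 0 by omega, Nat.add_one_ne_zero, if_false]
    exact cycleCoord_pred_add_succ ht.ne' (by omega) (by omega)
  · rw [neighborFinset_cpe_last hn, Finset.sum_pair (by rw [Ne, Fin.mk.injEq]; omega)]
    have hsymm : cycleCoord (2 * n + 1) (2 * n + 1) t = cycleCoord (2 * n + 1) 0 t := by
      simp [cycleCoord, add_comm]
    simp only [cpeVec, show 2 * n ≠ 0 by omega, show 2 * n + 1 ≠ 0 by omega, Nat.one_ne_zero,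
      if_false, Nat.sub_self, Nat.add_sub_cancel]
    rw [← hsymm]
    exact cycleCoord_pred_add_succ ht.ne' (by omega) (by omega)

theorem specRad_cpe {n : ℕ} (hn : 1 ≤ n) :
    specRad ((cpe n).adjMatrix ℝ) = cpeRoot n + (cpeRoot n)⁻¹ := by
  have ht : 0 < cpeRoot n := one_pos.trans (one_lt_cpeRoot n)
  exact specRad_eq_of_pos_eigenvector
    (fun i j => by rw [SimpleGraph.adjMatrix_apply]; split_ifs <;> norm_num)
    (cpeVec_pos n ht) (cpe_adjMatrix_mulVec_cpeVec hn ht (cpeChar_cpeRoot n))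

/-- The adjacency spectral radii of the graphs `C_{2n+1} + e` form a strictly decreasing
sequence (for `n ≥ 1`) converging to `τ^{3/2} = √(2 + √5)`. -/
theorem stmt_11 :
    (∀ m n : ℕ, 1 ≤ m → m < n →
      specRad ((cpe n).adjMatrix ℝ) < specRad ((cpe m).adjMatrix ℝ)) ∧
    Filter.Tendsto (fun n => specRad ((cpe n).adjMatrix ℝ)) Filter.atTop
      (nhds (Real.sqrt (2 + Real.sqrt 5))) := by
  refine ⟨fun m n hm hmn => ?_, ?_⟩
  · rw [specRad_cpe (hm.trans hmn.le), specRad_cpe hm]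
    exact add_inv_lt_add_inv (one_lt_cpeRoot n).le (cpeRoot_strictAnti hmn)
  · rw [← sqrt_goldenRatio_add_inv]
    have hlim := tendsto_cpeRoot
    refine (hlim.add (hlim.inv₀ (one_pos.trans one_lt_sqrt_goldenRatio).ne')).congr' ?_
    filter_upwards [Filter.eventually_ge_atTop 1] with n hn
    exact (specRad_cpe hn).symm
end

section
/- If a connected simple graph G properly contains a cycle (i.e., G contains a cycle and is not itself a cycle), then ρ(A(G)) > sqrt(2 + sqrt 5). -/
/-!
Let `τ` be the golden ratio and `t = τ^(-1/2)`, so that `t⁻² - t² = 1` and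
`t + t⁻¹ = τ^(3/2) = √(2 + √5)`. The graph contains a cycle `C` of some length `n` and a vertex
`u` off `C` adjacent to a vertex `v₀` of `C`: take a boundary edge of `C` if `C` does not span,
and otherwise cut `C` along a chord at a vertex of degree `≥ 3`. On the vertex at distance `k`
along `C` from `v₀` put the weight `x_k = t^k + t^(n-k)`. As a sum of two geometric progressions
it satisfies `x_{k-1} + x_{k+1} = c x_k` with `c = t + t⁻¹` at every vertex of `C` except `v₀`,
where the deficit is `(1 - tⁿ) / c`. Giving `u` the weight `x_0 / c = (1 + tⁿ) / c` makes
`c x ≤ A x` hold everywhere, strictly at `v₀`. Hence `c ‖x‖² < xᵀ A x ≤ ρ(A) ‖x‖²`.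
-/

open Matrix

namespace Matrix

variable {n : Type*} [Fintype n] [DecidableEq n]

lemma ofReal_mem_spectrum_map_ofReal {A : Matrix n n ℝ} {r : ℝ} (hr : r ∈ spectrum ℝ A) :
    (r : ℂ) ∈ spectrum ℂ (A.map Complex.ofReal) := by
  rw [mem_spectrum_iff_isRoot_charpoly] at hr ⊢
  rw [show A.map Complex.ofReal = A.map Complex.ofRealHom from rfl, charpoly_map]
  exact hr.map

lemma le_specRad_of_mem_spectrum {A : Matrix n n ℝ} {r : ℝ} (hr : r ∈ spectrum ℝ A) :
    r ≤ specRad A := by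
  have hbdd : BddAbove {s : ℝ | ∃ μ ∈ spectrum ℂ (A.map Complex.ofReal), s = ‖μ‖} := by
    simpa [Set.image, eq_comm] using
      ((finite_spectrum (A.map Complex.ofReal)).image (‖·‖)).bddAbove
  calc r ≤ |r| := le_abs_self r
    _ ≤ specRad A := le_csSup hbdd ⟨r, ofReal_mem_spectrum_map_ofReal hr, by simp⟩

lemma dotProduct_mulVec_le_specRad_mul {A : Matrix n n ℝ} (hA : A.IsSymm) (y : n → ℝ) :
    y ⬝ᵥ (A *ᵥ y) ≤ specRad A * (y ⬝ᵥ y) := by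
  have hpsd : (algebraMap ℝ _ (specRad A) - A).PosSemidef := by
    refine posSemidef_iff_isHermitian_and_spectrum_nonneg.mpr
      ⟨(isHermitian_diagonal _).sub (isHermitian_iff_isSymm.mpr hA), ?_⟩
    rw [← spectrum.singleton_sub_eq]
    rintro _ ⟨_, rfl, r, hr, rfl⟩
    exact sub_nonneg.mpr (le_specRad_of_mem_spectrum hr)
  simpa [Algebra.algebraMap_eq_smul_one, sub_mulVec, dotProduct_sub, smul_mulVec] using
    hpsd.dotProduct_mulVec_nonneg y

lemma lt_specRad_of_mul_le_mulVec {A : Matrix n n ℝ} (hA : A.IsSymm) {c : ℝ} {y : n → ℝ}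
    (hy : 0 ≤ y) (hle : ∀ v, c * y v ≤ (A *ᵥ y) v)
    (hlt : ∃ v, 0 < y v ∧ c * y v < (A *ᵥ y) v) : c < specRad A := by
  obtain ⟨v, hv, hcv⟩ := hlt
  have hquad : c * (y ⬝ᵥ y) < y ⬝ᵥ (A *ᵥ y) := by
    simp only [dotProduct, Finset.mul_sum]
    refine Finset.sum_lt_sum (fun w _ => ?_) ⟨v, Finset.mem_univ v, ?_⟩
    · rw [mul_left_comm]; exact mul_le_mul_of_nonneg_left (hle w) (hy w)
    · rw [mul_left_comm]; exact mul_lt_mul_of_pos_left hcv hv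
  exact lt_of_mul_lt_mul_right (hquad.trans_le (dotProduct_mulVec_le_specRad_mul hA y))
    (Finset.sum_nonneg fun w _ => mul_self_nonneg (y w))

end Matrix

noncomputable def cycleWeight (t : ℝ) (n : ℕ) (k : ℤ) : ℝ := t ^ k + t ^ ((n : ℤ) - k)

section CycleWeight

variable {t : ℝ} {N : ℕ}

lemma cycleWeight_pos (ht : 0 < t) (n : ℕ) (k : ℤ) : 0 < cycleWeight t n k := by
  unfold cycleWeight; positivity

lemma cycleWeight_natCast_sub (t : ℝ) (n : ℕ) (k : ℤ) :
    cycleWeight t n (n - k) = cycleWeight t n k := by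
  simp [cycleWeight, add_comm]

lemma cycleWeight_zero (t : ℝ) (n : ℕ) : cycleWeight t n 0 = 1 + t ^ n := by
  simp [cycleWeight]

lemma cycleWeight_one (ht : t ≠ 0) (n : ℕ) : cycleWeight t n 1 = t + t ^ n * t⁻¹ := by
  simp [cycleWeight, zpow_sub_one₀ ht]

lemma cycleWeight_sub_one_add_cycleWeight_add_one (ht : t ≠ 0) (n : ℕ) (k : ℤ) :
    cycleWeight t n (k - 1) + cycleWeight t n (k + 1) = (t + t⁻¹) * cycleWeight t n k := by
  rw [cycleWeight, cycleWeight, cycleWeight, show (n : ℤ) - (k - 1) = n - k + 1 by ring,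
    show (n : ℤ) - (k + 1) = n - k - 1 by ring]
  simp only [zpow_add_one₀ ht, zpow_sub_one₀ ht]
  ring

lemma cycleWeight_val_add_one (t : ℝ) (i : Fin (N + 3)) :
    cycleWeight t (N + 3) (i + 1 : Fin (N + 3)).val = cycleWeight t (N + 3) (i.val + 1) := by
  rw [Fin.val_add_one]
  split_ifs with h
  · subst h
    rw [Nat.cast_zero, ← cycleWeight_natCast_sub t (N + 3) 0]
    push_cast; ring_nf
  · push_cast; rfl

lemma cycleWeight_val_sub_one (t : ℝ) {i : Fin (N + 3)} (hi : i ≠ 0) :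
    cycleWeight t (N + 3) (i - 1 : Fin (N + 3)).val = cycleWeight t (N + 3) (i.val - 1) := by
  rw [Fin.val_sub_one_of_ne_zero hi,
    Nat.cast_sub (Nat.one_le_iff_ne_zero.mpr (Fin.val_ne_zero_iff.mpr hi)), Nat.cast_one]

lemma cycleWeight_val_neg_one (t : ℝ) :
    cycleWeight t (N + 3) (-1 : Fin (N + 3)).val = cycleWeight t (N + 3) 1 := by
  rw [Fin.coe_neg_one, ← cycleWeight_natCast_sub t (N + 3) 1]
  push_cast; ring_nf

end CycleWeight

lemma Fin.sub_one_ne_add_one {N : ℕ} (i : Fin (N + 3)) : i - 1 ≠ i + 1 := by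
  rw [Ne, sub_eq_iff_eq_add, add_assoc, left_eq_add, Fin.ext_iff, Fin.val_add]
  simp [Nat.mod_eq_of_lt (show 2 < N + 3 by omega)]

namespace SimpleGraph

variable {V : Type*} {G : SimpleGraph V} {N : ℕ}

lemma sum_le_adjMatrix_mulVec [Fintype V] [DecidableRel G.Adj] {y : V → ℝ} (hy : 0 ≤ y)
    {v : V} {s : Finset V} (hs : s ⊆ G.neighborFinset v) :
    ∑ w ∈ s, y w ≤ (G.adjMatrix ℝ *ᵥ y) v := by
  rw [adjMatrix_mulVec_apply]
  exact Finset.sum_le_sum_of_subset_of_nonneg hs fun w _ _ => hy w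

lemma Copy.adj_add_one (f : (cycleGraph (N + 3)).Copy G) (i : Fin (N + 3)) :
    G.Adj (f i) (f (i + 1)) :=
  f.toHom.map_adj (by simp [cycleGraph_adj])

lemma Copy.adj_of_val_eq_add_one (f : (cycleGraph (N + 3)).Copy G) {i j : Fin (N + 3)}
    (h : j.val = i.val + 1) : G.Adj (f i) (f j) := by
  obtain rfl : j = i + 1 := Fin.ext (by rw [h, Fin.val_add_one_of_lt' (by omega)])
  exact f.adj_add_one i

def cycleGraphCopy (φ : Fin (N + 3) → V) (hφ : φ.Injective)
    (hadj : ∀ i, G.Adj (φ i) (φ (i + 1))) : (cycleGraph (N + 3)).Copy G :=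
  ⟨⟨φ, fun {i j} h => by
    rcases cycleGraph_adj.mp h with h | h
    · obtain rfl := sub_eq_iff_eq_add'.mp h
      exact (hadj j).symm
    · obtain rfl := sub_eq_iff_eq_add'.mp h
      exact hadj i⟩, hφ⟩

@[simp] lemma cycleGraphCopy_apply (φ : Fin (N + 3) → V) (hφ : φ.Injective)
    (hadj : ∀ i, G.Adj (φ i) (φ (i + 1))) (i : Fin (N + 3)) : cycleGraphCopy φ hφ hadj i = φ i :=
  rfl

def Copy.rotate (f : (cycleGraph (N + 3)).Copy G) (k : Fin (N + 3)) :
    (cycleGraph (N + 3)).Copy G :=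
  cycleGraphCopy (fun i => f (i + k)) (f.injective.comp (add_left_injective k))
    fun i => by simpa [add_right_comm] using f.adj_add_one (i + k)

@[simp] lemma Copy.rotate_apply (f : (cycleGraph (N + 3)).Copy G) (k i : Fin (N + 3)) :
    f.rotate k i = f (i + k) := rfl

@[simp] lemma Copy.range_rotate (f : (cycleGraph (N + 3)).Copy G) (k : Fin (N + 3)) :
    Set.range (f.rotate k) = Set.range f :=
  (Equiv.addRight k).surjective.range_comp f

/-- The chord `f 0 — f b` closes the shorter cycle `f b, f (b - 1), …, f 0`, and `f (b + 1)`
hangs off its first vertex. -/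
lemma Copy.exists_cycleGraph_copy_with_pendant_of_chord (f : (cycleGraph (N + 3)).Copy G)
    {b : Fin (N + 3)} (hb : 2 ≤ b.val) (hbN : b.val ≤ N + 1) (hchord : G.Adj (f 0) (f b)) :
    ∃ (M : ℕ) (f' : (cycleGraph (M + 3)).Copy G) (u : V), u ∉ Set.range f' ∧ G.Adj u (f' 0) := by
  obtain ⟨M, hM⟩ : ∃ M, b.val = M + 2 := ⟨b.val - 2, by omega⟩
  let φ : Fin (M + 3) → V := fun j => f ⟨b.val - j.val, by omega⟩
  have hφ : φ.Injective := fun j k h => by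
    have := congrArg Fin.val (f.injective h)
    simp only at this
    omega
  have hadj : ∀ j, G.Adj (φ j) (φ (j + 1)) := by
    intro j
    by_cases hj : j = Fin.last (M + 2)
    · subst hj
      rw [Fin.last_add_one]
      convert hchord using 2 <;> simp [Fin.ext_iff, hM]
    · have hlt : j.val < M + 2 := Fin.lt_last_iff_ne_last.mpr hj
      have := Fin.val_add_one_of_lt (Fin.lt_last_iff_ne_last.mpr hj)
      exact (f.adj_of_val_eq_add_one (by simp only [this]; omega)).symm
  refine ⟨M, cycleGraphCopy φ hφ hadj, f (b + 1), fun ⟨j, hj⟩ => ?_, ?_⟩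
  · have := congrArg Fin.val (f.injective hj)
    simp only [Fin.val_add_one_of_lt' (show b.val + 1 < N + 3 by omega)] at this
    omega
  · simpa [φ] using (f.adj_add_one b).symm

/-- The pendant vertex gets `(t⁻¹ - t) x_{f 0}`, which is `x_{f 0} / (t + t⁻¹)` when
`t⁻² - t² = 1`. -/
noncomputable def Copy.pendantCycleVector [DecidableEq V] (f : (cycleGraph (N + 3)).Copy G)
    (u : V) (t : ℝ) : V → ℝ :=
  Function.update (Function.extend f (fun i => cycleWeight t (N + 3) i.val) 0) u
    ((t⁻¹ - t) * cycleWeight t (N + 3) 0)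

section PendantCycleVector

variable [DecidableEq V] (f : (cycleGraph (N + 3)).Copy G) {u : V} {t : ℝ}

lemma Copy.pendantCycleVector_self :
    f.pendantCycleVector u t u = (t⁻¹ - t) * cycleWeight t (N + 3) 0 :=
  Function.update_self ..

lemma Copy.pendantCycleVector_apply (hu : u ∉ Set.range f) (i : Fin (N + 3)) :
    f.pendantCycleVector u t (f i) = cycleWeight t (N + 3) i.val := by
  rw [pendantCycleVector, Function.update_of_ne (fun h => hu ⟨i, h⟩)]
  exact f.injective.extend_apply _ (0 : V → ℝ) i

lemma Copy.pendantCycleVector_of_notMem {v : V} (hvu : v ≠ u) (hv : v ∉ Set.range f) :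
    f.pendantCycleVector u t v = 0 := by
  rw [pendantCycleVector, Function.update_of_ne hvu, Function.extend_apply' _ _ _ hv,
    Pi.zero_apply]

lemma Copy.pendantCycleVector_nonneg (hu : u ∉ Set.range f) (ht0 : 0 < t) (ht1 : t ≤ 1) :
    0 ≤ f.pendantCycleVector u t := by
  intro v
  by_cases hvu : v = u
  · rw [hvu, pendantCycleVector_self]
    exact mul_nonneg (by linarith [one_le_inv₀ ht0 |>.mpr ht1]) (cycleWeight_pos ht0 _ _).le
  by_cases hv : v ∈ Set.range f
  · obtain ⟨i, rfl⟩ := hv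
    rw [f.pendantCycleVector_apply hu]
    exact (cycleWeight_pos ht0 _ _).le
  · rw [f.pendantCycleVector_of_notMem hvu hv]; rfl

end PendantCycleVector

variable [Fintype V] [DecidableEq V] [DecidableRel G.Adj]

lemma Copy.pair_subset_neighborFinset (f : (cycleGraph (N + 3)).Copy G) (i : Fin (N + 3)) :
    {f (i - 1), f (i + 1)} ⊆ G.neighborFinset (f i) := by
  simpa [Finset.insert_subset_iff] using
    ⟨(sub_add_cancel i 1 ▸ f.adj_add_one (i - 1)).symm, f.adj_add_one i⟩

lemma Copy.exists_chord_of_degree_ne_two (f : (cycleGraph (N + 3)).Copy G)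
    (hf : Function.Surjective f) (hdeg : G.degree (f 0) ≠ 2) :
    ∃ b : Fin (N + 3), 2 ≤ b.val ∧ b.val ≤ N + 1 ∧ G.Adj (f 0) (f b) := by
  have hne : f (0 - 1) ≠ f (0 + 1) := fun h => Fin.sub_one_ne_add_one 0 (f.injective h)
  have hlt : ({f (0 - 1), f (0 + 1)} : Finset V).card < (G.neighborFinset (f 0)).card := by
    refine lt_of_le_of_ne (Finset.card_le_card (f.pair_subset_neighborFinset 0)) ?_
    rw [Finset.card_pair hne, card_neighborFinset_eq_degree]
    exact hdeg.symm
  obtain ⟨z, hz, hz'⟩ := Finset.exists_mem_notMem_of_card_lt_card hlt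
  obtain ⟨b, rfl⟩ := hf z
  have hb0 : b.val ≠ 0 := fun h => by
    obtain rfl : b = 0 := Fin.ext h
    exact G.irrefl ((mem_neighborFinset _ _ _).mp hz)
  have hb1 : b.val ≠ 1 := fun h => by
    obtain rfl : b = 0 + 1 := Fin.ext (by simp [h])
    simp at hz'
  have hbN : b.val ≠ N + 2 := fun h => by
    obtain rfl : b = 0 - 1 := Fin.ext (by simp [h, Fin.coe_neg_one])
    simp at hz'
  exact ⟨b, by omega, by omega, (mem_neighborFinset _ _ _).mp hz⟩

theorem exists_cycleGraph_copy_with_pendant (hconn : G.Connected) (hcyc : ¬ G.IsAcyclic)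
    (hdeg : ∃ v, G.degree v ≠ 2) :
    ∃ (N : ℕ) (f : (cycleGraph (N + 3)).Copy G) (u : V), u ∉ Set.range f ∧ G.Adj u (f 0) := by
  obtain ⟨v, p, hp⟩ : ∃ v, ∃ p : G.Walk v v, p.IsCycle := by simpa [IsAcyclic] using hcyc
  obtain ⟨N, hN⟩ := Nat.exists_eq_add_of_le' hp.three_le_length
  obtain ⟨f⟩ := (cycleGraph_isContained_iff (n := N + 3) (by omega)).mpr ⟨v, p, hp, hN⟩
  by_cases hf : Function.Surjective f
  · obtain ⟨w, hw⟩ := hdeg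
    obtain ⟨k, rfl⟩ := hf w
    have hf' : Function.Surjective (f.rotate k) := by
      rwa [← Set.range_eq_univ, Copy.range_rotate, Set.range_eq_univ]
    obtain ⟨b, hb2, hbN, hchord⟩ :=
      (f.rotate k).exists_chord_of_degree_ne_two hf' (by rwa [Copy.rotate_apply, zero_add])
    exact (f.rotate k).exists_cycleGraph_copy_with_pendant_of_chord hb2 hbN hchord
  · obtain ⟨w, hw⟩ : ∃ w, w ∉ Set.range f := by simpa [Function.Surjective] using hf
    obtain ⟨q⟩ := hconn.preconnected (f 0) w
    obtain ⟨d, -, ⟨k, hk⟩, hd⟩ := q.exists_boundary_dart (Set.range f) ⟨0, rfl⟩ hw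
    exact ⟨N, f.rotate k, d.snd, by simpa using hd, by simpa [hk] using d.adj.symm⟩

lemma Copy.add_inv_mul_pendantCycleVector_le (f : (cycleGraph (N + 3)).Copy G) {u : V}
    (hu : u ∉ Set.range f) {t : ℝ} (ht0 : 0 < t) (ht1 : t ≤ 1) {i : Fin (N + 3)}
    (hi : i ≠ 0) :
    (t + t⁻¹) * f.pendantCycleVector u t (f i) ≤
      (G.adjMatrix ℝ *ᵥ f.pendantCycleVector u t) (f i) := by
  have hne : f (i - 1) ≠ f (i + 1) := fun h => Fin.sub_one_ne_add_one i (f.injective h)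
  calc (t + t⁻¹) * f.pendantCycleVector u t (f i)
        = ∑ w ∈ {f (i - 1), f (i + 1)}, f.pendantCycleVector u t w := by
          simp only [Finset.sum_pair hne, f.pendantCycleVector_apply hu, cycleWeight_val_add_one,
            cycleWeight_val_sub_one t hi, cycleWeight_sub_one_add_cycleWeight_add_one ht0.ne']
    _ ≤ _ := sum_le_adjMatrix_mulVec (f.pendantCycleVector_nonneg hu ht0 ht1)
          (f.pair_subset_neighborFinset i)

lemma Copy.add_inv_mul_pendantCycleVector_lt (f : (cycleGraph (N + 3)).Copy G) {u : V}
    (hu : u ∉ Set.range f) {t : ℝ} (hadj : G.Adj u (f 0)) (ht0 : 0 < t)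
    (ht1 : t < 1) :
    (t + t⁻¹) * f.pendantCycleVector u t (f 0) <
      (G.adjMatrix ℝ *ᵥ f.pendantCycleVector u t) (f 0) := by
  have hne : f (0 - 1) ≠ f (0 + 1) := fun h => Fin.sub_one_ne_add_one 0 (f.injective h)
  have hu' : u ∉ ({f (0 - 1), f (0 + 1)} : Finset V) := by
    simpa [not_or] using ⟨fun h => hu ⟨_, h.symm⟩, fun h => hu ⟨_, h.symm⟩⟩
  have hT : 0 < t ^ (N + 3) := by positivity
  calc (t + t⁻¹) * f.pendantCycleVector u t (f 0)
        < ∑ w ∈ insert u {f (0 - 1), f (0 + 1)}, f.pendantCycleVector u t w := by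
          rw [Finset.sum_insert hu', Finset.sum_pair hne]
          simp only [f.pendantCycleVector_apply hu, pendantCycleVector_self, zero_sub, zero_add,
            cycleWeight_val_neg_one, Fin.val_zero, Fin.val_one, Nat.cast_zero, Nat.cast_one]
          rw [cycleWeight_zero, cycleWeight_one ht0.ne']
          -- the excess over `(t + t⁻¹) x₀` is `2 tⁿ (t⁻¹ - t)`
          field_simp
          nlinarith [mul_pos hT (by nlinarith : 0 < 1 - t ^ 2)]
    _ ≤ _ := sum_le_adjMatrix_mulVec (f.pendantCycleVector_nonneg hu ht0 ht1.le)
          (Finset.insert_subset ((mem_neighborFinset _ _ _).mpr hadj.symm)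
            (f.pair_subset_neighborFinset 0))

lemma Copy.add_inv_mul_pendantCycleVector_self_le (f : (cycleGraph (N + 3)).Copy G) {u : V}
    (hu : u ∉ Set.range f) {t : ℝ} (hadj : G.Adj u (f 0)) (ht0 : 0 < t) (ht1 : t ≤ 1)
    (ht : t⁻¹ ^ 2 - t ^ 2 = 1) :
    (t + t⁻¹) * f.pendantCycleVector u t u ≤ (G.adjMatrix ℝ *ᵥ f.pendantCycleVector u t) u :=
  calc (t + t⁻¹) * f.pendantCycleVector u t u = ∑ w ∈ {f 0}, f.pendantCycleVector u t w := by
        rw [Finset.sum_singleton, f.pendantCycleVector_apply hu, pendantCycleVector_self,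
          ← mul_assoc, show (t + t⁻¹) * (t⁻¹ - t) = 1 by linear_combination ht, one_mul,
          Fin.val_zero, Nat.cast_zero]
    _ ≤ _ := sum_le_adjMatrix_mulVec (f.pendantCycleVector_nonneg hu ht0 ht1)
        (by simpa using hadj)

theorem add_inv_lt_specRad_of_cycleGraph_copy (f : (cycleGraph (N + 3)).Copy G) {u : V}
    (hu : u ∉ Set.range f) (hadj : G.Adj u (f 0)) {t : ℝ} (ht0 : 0 < t)
    (ht : t⁻¹ ^ 2 - t ^ 2 = 1) : t + t⁻¹ < specRad (G.adjMatrix ℝ) := by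
  have ht1 : t < 1 := by
    by_contra! h
    nlinarith [inv_le_one_of_one_le₀ h, inv_pos.mpr ht0]
  have hy := f.pendantCycleVector_nonneg hu ht0 ht1.le
  have hzero := f.add_inv_mul_pendantCycleVector_lt hu hadj ht0 ht1
  refine (G.adjMatrix ℝ).lt_specRad_of_mul_le_mulVec (isSymm_adjMatrix G) hy (fun v => ?_)
    ⟨f 0, f.pendantCycleVector_apply hu 0 ▸ cycleWeight_pos ht0 _ _, hzero⟩
  by_cases hvu : v = u
  · exact hvu ▸ f.add_inv_mul_pendantCycleVector_self_le hu hadj ht0 ht1.le ht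
  by_cases hv : v ∈ Set.range f
  · obtain ⟨i, rfl⟩ := hv
    obtain rfl | hi := eq_or_ne i 0
    · exact hzero.le
    · exact f.add_inv_mul_pendantCycleVector_le hu ht0 ht1.le hi
  · rw [f.pendantCycleVector_of_notMem hvu hv, mul_zero]
    simpa using sum_le_adjMatrix_mulVec hy (Finset.empty_subset (G.neighborFinset v))

end SimpleGraph

open Real goldenRatio in
lemma exists_add_inv_eq_sqrt_two_add_sqrt_five :
    ∃ t : ℝ, 0 < t ∧ t⁻¹ ^ 2 - t ^ 2 = 1 ∧ t + t⁻¹ = √(2 + √5) := by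
  have hφ : (√φ) ^ 2 = φ := sq_sqrt goldenRatio_pos.le
  refine ⟨(√φ)⁻¹, by positivity, ?_, ?_⟩
  · rw [inv_inv, inv_pow, hφ, inv_goldenRatio, sub_neg_eq_add, goldenRatio_add_goldenConj]
  · rw [inv_inv, ← sqrt_sq (by positivity : 0 ≤ (√φ)⁻¹ + √φ)]
    congr 1
    rw [add_sq, inv_pow, hφ, inv_goldenRatio, mul_assoc,
      inv_mul_cancel₀ (sqrt_pos.mpr goldenRatio_pos).ne', ← goldenRatio_sub_goldenConj]
    ring

/-- If a connected graph `G` properly contains a cycle (it has a cycle but is not itself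
a cycle, i.e. not all degrees equal `2`), then `ρ(A(G)) > √(2 + √5)`. -/
theorem stmt_13 {V : Type*} [Fintype V] [DecidableEq V] (G : SimpleGraph V)
    [DecidableRel G.Adj] (hconn : G.Connected) (hcyc : ¬ G.IsAcyclic)
    (hnotcycle : ¬ ∀ v : V, G.degree v = 2) :
    Real.sqrt (2 + Real.sqrt 5) < specRad (G.adjMatrix ℝ) := by
  obtain ⟨N, f, u, hu, hadj⟩ :=
    G.exists_cycleGraph_copy_with_pendant hconn hcyc (by simpa using hnotcycle)
  obtain ⟨t, ht0, ht, hc⟩ := exists_add_inv_eq_sqrt_two_add_sqrt_five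
  exact hc ▸ G.add_inv_lt_specRad_of_cycleGraph_copy f hu hadj ht0 ht
end

section
/- Let G be a connected simple graph, k an even integer ≥ 4, and x a positive vector on V(G). Define 𝐱 on V(G^{k,k/2}) by 𝐱_u = x_v^{2/k} for each u in the blown-up set 𝐯. Then x satisfies A(G)x = ρ x (the adjacency eigenvector equation with eigenvalue ρ) if and only if 𝐱 satisfies the adjacency-tensor eigenvector equation of G^{k,k/2} with eigenvalue ρ: for every vertex u ∈ 𝐮, ρ 𝐱_u^{k-1} = Σ_{𝐮𝐯 ∈ E(G^{k,k/2})} 𝐱_𝐮^{k/2 - 1} 𝐱_𝐯^{k/2}. Consequently ρ(A(G)) = ρ(𝒜(G^{k,k/2})). -/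
open Matrix

/-- The blow-up of a vertex `v` into a `(k/2)`-set. -/
def blow {V : Type*} [DecidableEq V] (k : ℕ) (v : V) : Finset (V × ℕ) :=
  ({v} : Finset V) ×ˢ Finset.range (k / 2)

/-- The edge set of the hypergraph `G^{k,k/2}`. -/
def hEdges {V : Type*} [Fintype V] [DecidableEq V] (G : SimpleGraph V)
    [DecidableRel G.Adj] (k : ℕ) : Finset (Finset (V × ℕ)) :=
  (Finset.univ.filter fun p : V × V => G.Adj p.1 p.2).image
    (fun p => blow k p.1 ∪ blow k p.2)

/-- `(𝒜 x^{k-1})_u` for the adjacency tensor of a `k`-uniform hypergraph with edge set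
`E`: the sum over edges `e` containing `u` of `∏_{w ∈ e \ {u}} x_w`. -/
noncomputable def aPoly {W : Type*} [DecidableEq W] (E : Finset (Finset W)) (x : W → ℂ) (u : W) : ℂ :=
  ∑ e ∈ E.filter (fun e => u ∈ e), ∏ w ∈ e.erase u, x w

/-- The spectral radius of the adjacency tensor of a `k`-uniform hypergraph:
the supremum of moduli of eigenvalues `λ` with `𝒜 x^{k-1} = λ x^{[k-1]}`, `x ≠ 0`. -/
noncomputable def hSpecRad {W : Type*} [DecidableEq W] (E : Finset (Finset W))
    (k : ℕ) : ℝ :=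
  sSup {r : ℝ | ∃ (lam : ℂ) (x : W → ℂ), x ≠ 0 ∧
    (∀ u, aPoly E x u = lam * (x u) ^ (k - 1)) ∧ r = ‖lam‖}

/-!
Write `t_v = x_v^{2/k}`, so that `t_v^{k/2} = x_v`. The tensor equation at a vertex of `𝐮` reads
`t_u^{k/2-1} (ρ t_u^{k/2} - ∑_{v ∼ u} t_v^{k/2}) = 0`, and `t_u > 0`, so it is the graph equation
at `u`.

For the spectral radii, a complex eigenvector `Y` of `A(G)` lifts to the tensor eigenvector that
is a `k/2`-th root of `Y_v` on all of `𝐯`, so every eigenvalue of `A(G)` is a tensor eigenvalue.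
Conversely, let `(λ, X)` be a tensor eigenpair with `λ ≠ 0`; it vanishes on the isolated vertices
`(v, i)`, `i ≥ k/2`, of the vertex type `V × ℕ`. Put `P_v = ∏_{𝐯} X` and `S_v = ∑_{w ∼ v} P_w`.
The equation at `(v, i)` is `λ X_{(v,i)}^k = P_v S_v`; multiplying these over `i` gives
`(λ P_v²)^{k/2} = (P_v S_v)^{k/2}`, hence `|λ| |P_v|² ≤ |P_v| ∑_{w ∼ v} |P_w|`. Summing over `v`
bounds `|λ| ‖y‖²` by `yᵀ A y ≤ ρ(A) ‖y‖²` for `y = |P|`, where the last step holds because `A` is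
Hermitian, so that its operator norm is its spectral radius.
-/

open Finset

namespace Matrix

variable {n : Type*} [Fintype n] [DecidableEq n]

theorem mem_spectrum_iff_exists_mulVec_eq_smul_s14 {K : Type*} [Field K] {A : Matrix n n K} {μ : K} :
    μ ∈ spectrum K A ↔ ∃ y ≠ 0, A *ᵥ y = μ • y := by
  rw [← spectrum_toLin', ← Module.End.hasEigenvalue_iff_mem_spectrum]
  constructor
  · intro h
    obtain ⟨y, hy, hy0⟩ := h.exists_hasEigenvector
    exact ⟨y, hy0, by simpa using Module.End.mem_eigenspace_iff.1 hy⟩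
  · rintro ⟨y, hy0, hy⟩
    exact Module.End.hasEigenvalue_of_hasEigenvector
      ⟨Module.End.mem_eigenspace_iff.2 (by simpa using hy), hy0⟩

open scoped Matrix.Norms.L2Operator in
theorem IsHermitian.norm_star_dotProduct_mulVec_le {A : Matrix n n ℂ} (hA : A.IsHermitian)
    {r : ℝ} (hr0 : 0 ≤ r) (hr : ∀ μ ∈ spectrum ℂ A, ‖μ‖ ≤ r) (y : n → ℂ) :
    ‖star y ⬝ᵥ (A *ᵥ y)‖ ≤ r * ∑ i, ‖y i‖ ^ 2 := by
  have hA_le : ‖A‖ ≤ r := by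
    have h : spectralRadius ℂ A ≤ ENNReal.ofReal r :=
      iSup₂_le fun μ hμ => by
        rw [← ENNReal.ofReal_coe_nnreal, coe_nnnorm]; exact ENNReal.ofReal_le_ofReal (hr μ hμ)
    rw [hA.isSelfAdjoint.spectralRadius_eq_nnnorm, ← ENNReal.ofReal_coe_nnreal,
      ENNReal.ofReal_le_ofReal_iff hr0] at h
    exact h
  set z := WithLp.toLp 2 y
  have hz : ‖z‖ ^ 2 = ∑ i, ‖y i‖ ^ 2 := EuclideanSpace.norm_sq_eq z
  calc ‖star y ⬝ᵥ (A *ᵥ y)‖ = ‖inner ℂ z ((EuclideanSpace.equiv n ℂ).symm (A *ᵥ y))‖ := by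
        rw [EuclideanSpace.inner_toLp_toLp, dotProduct_comm]; rfl
    _ ≤ ‖z‖ * (‖A‖ * ‖z‖) :=
        (norm_inner_le_norm _ _).trans
          (mul_le_mul_of_nonneg_left (A.l2_opNorm_mulVec z) (norm_nonneg _))
    _ ≤ r * ∑ i, ‖y i‖ ^ 2 := by
        rw [← hz]; nlinarith [norm_nonneg z, sq_nonneg ‖z‖]

end Matrix

namespace SimpleGraph

variable {V : Type*} (G : SimpleGraph V) [DecidableRel G.Adj]

theorem map_ofReal_adjMatrix : (G.adjMatrix ℝ).map Complex.ofReal = G.adjMatrix ℂ := by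
  ext i j
  simp [adjMatrix_apply, apply_ite Complex.ofReal]

theorem isHermitian_adjMatrix_complex : (G.adjMatrix ℂ).IsHermitian := by
  ext i j
  simp [adjMatrix_apply, apply_ite (starRingEnd ℂ), G.adj_comm]

variable [Fintype V]

theorem adjMatrix_mulVec_pow_eq_smul_iff {k : ℕ} (hk : Even k) (hk0 : 0 < k) {t : V → ℝ}
    (ht : ∀ v, 0 < t v) (ρ : ℝ) :
    G.adjMatrix ℝ *ᵥ (fun v => t v ^ (k / 2)) = ρ • (fun v => t v ^ (k / 2)) ↔
      ∀ u, ρ * t u ^ (k - 1) = ∑ v ∈ G.neighborFinset u, t u ^ (k / 2 - 1) * t v ^ (k / 2) := by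
  have hk1 : k - 1 = (k / 2 - 1) + k / 2 := by obtain ⟨m, rfl⟩ := hk; omega
  rw [funext_iff]
  refine forall_congr' fun u => ?_
  rw [adjMatrix_mulVec_apply, Pi.smul_apply, smul_eq_mul, ← mul_sum, hk1, pow_add,
    mul_left_comm, mul_right_inj' (pow_pos (ht u) _).ne', eq_comm]

theorem sum_mul_sum_neighborFinset_le [DecidableEq V] {r : ℝ} (hr0 : 0 ≤ r)
    (hr : ∀ μ ∈ spectrum ℂ (G.adjMatrix ℂ), ‖μ‖ ≤ r) (y : V → ℝ) :
    ∑ v, y v * ∑ w ∈ G.neighborFinset v, y w ≤ r * ∑ v, y v ^ 2 := by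
  have h := G.isHermitian_adjMatrix_complex.norm_star_dotProduct_mulVec_le hr0 hr
    (fun v => (y v : ℂ))
  have hq : star (fun v => (y v : ℂ)) ⬝ᵥ (G.adjMatrix ℂ *ᵥ fun v => (y v : ℂ)) =
      ((∑ v, y v * ∑ w ∈ G.neighborFinset v, y w : ℝ) : ℂ) := by
    simp [dotProduct, adjMatrix_mulVec_apply]
  rw [hq, Complex.norm_real, Real.norm_eq_abs] at h
  simpa using (le_abs_self _).trans h

end SimpleGraph

section Hypergraph

variable {V : Type*} [DecidableEq V] {k : ℕ}

theorem mem_blow {v w : V} {i : ℕ} : (w, i) ∈ blow k v ↔ w = v ∧ i < k / 2 := by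
  simp only [blow, mem_product, mem_singleton, mem_range]

theorem disjoint_blow {v w : V} (h : v ≠ w) : Disjoint (blow k v) (blow k w) := by
  rw [Finset.disjoint_left]
  rintro ⟨a, i⟩ ha hb
  exact h ((mem_blow.1 ha).1.symm.trans (mem_blow.1 hb).1)

def blowProd (k : ℕ) (X : V × ℕ → ℂ) (v : V) : ℂ :=
  ∏ j ∈ range (k / 2), X (v, j)

theorem prod_blow {M : Type*} [CommMonoid M] (X : V × ℕ → M) (v : V) :
    ∏ p ∈ blow k v, X p = ∏ j ∈ range (k / 2), X (v, j) := by
  simp [blow]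

theorem prod_erase_blow_union {M : Type*} [CommMonoid M] (X : V × ℕ → M) {v w : V}
    (hvw : v ≠ w) (i : ℕ) :
    ∏ p ∈ (blow k v ∪ blow k w).erase (v, i), X p =
      (∏ j ∈ (range (k / 2)).erase i, X (v, j)) * ∏ j ∈ range (k / 2), X (w, j) := by
  have hw : (v, i) ∉ blow k w := fun h => hvw (mem_blow.1 h).1
  have hv : (blow k v).erase (v, i) = {v} ×ˢ (range (k / 2)).erase i := by
    ext ⟨a, j⟩
    simp only [mem_erase, mem_blow, mem_product, mem_singleton, mem_range, ne_eq,
      Prod.mk.injEq]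
    tauto
  rw [erase_union_distrib, erase_eq_of_notMem hw, prod_union, hv, prod_product, prod_blow,
    prod_singleton]
  exact (disjoint_blow hvw).mono_left (erase_subset _ _)

variable [Fintype V] (G : SimpleGraph V) [DecidableRel G.Adj]

theorem mem_hEdges {e : Finset (V × ℕ)} :
    e ∈ hEdges G k ↔ ∃ a b, G.Adj a b ∧ blow k a ∪ blow k b = e := by
  simp [hEdges]

theorem filter_mem_hEdges {v : V} {i : ℕ} (hi : i < k / 2) :
    (hEdges G k).filter (fun e => (v, i) ∈ e) =
      (G.neighborFinset v).image (fun w => blow k v ∪ blow k w) := by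
  ext e
  simp only [mem_filter, mem_image, SimpleGraph.mem_neighborFinset, mem_hEdges]
  constructor
  · rintro ⟨⟨a, b, hab, rfl⟩, hm⟩
    rcases mem_union.1 hm with h | h <;> obtain ⟨rfl, -⟩ := mem_blow.1 h
    · exact ⟨b, hab, rfl⟩
    · exact ⟨a, hab.symm, union_comm _ _⟩
  · rintro ⟨w, hw, rfl⟩
    exact ⟨⟨v, w, hw, rfl⟩, mem_union_left _ (mem_blow.2 ⟨rfl, hi⟩)⟩

theorem filter_mem_hEdges_of_le {v : V} {i : ℕ} (hi : k / 2 ≤ i) :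
    (hEdges G k).filter (fun e => (v, i) ∈ e) = ∅ := by
  refine filter_eq_empty_iff.2 fun e he => ?_
  obtain ⟨a, b, -, rfl⟩ := (mem_hEdges G).1 he
  simp [mem_blow, hi.not_gt]

theorem aPoly_hEdges (X : V × ℕ → ℂ) (v : V) {i : ℕ} (hi : i < k / 2) :
    aPoly (hEdges G k) X (v, i) =
      (∏ j ∈ (range (k / 2)).erase i, X (v, j)) *
        ∑ w ∈ G.neighborFinset v, blowProd k X w := by
  have hinj : Set.InjOn (fun w => blow k v ∪ blow k w) (G.neighborFinset v) := by
    intro a ha b _ hab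
    have hva : v ≠ a := G.ne_of_adj ((G.mem_neighborFinset v a).1 ha)
    have h0 : (a, 0) ∈ blow k v ∪ blow k b := by
      rw [← show blow k v ∪ blow k a = blow k v ∪ blow k b from hab]
      exact mem_union_right _ (mem_blow.2 ⟨rfl, by omega⟩)
    rcases mem_union.1 h0 with h | h
    · exact absurd (mem_blow.1 h).1.symm hva
    · exact (mem_blow.1 h).1
  rw [aPoly, filter_mem_hEdges G hi, sum_image hinj, mul_sum]
  refine sum_congr rfl fun w hw => prod_erase_blow_union X ?_ i
  exact G.ne_of_adj ((G.mem_neighborFinset v w).1 hw)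

theorem aPoly_hEdges_of_le (X : V × ℕ → ℂ) (v : V) {i : ℕ} (hi : k / 2 ≤ i) :
    aPoly (hEdges G k) X (v, i) = 0 := by
  rw [aPoly, filter_mem_hEdges_of_le G hi, sum_empty]

theorem exists_aPoly_hEdges_eq_of_mulVec_eq (hk : Even k) (hk0 : 0 < k) {μ : ℂ} {Y : V → ℂ}
    (hY0 : Y ≠ 0) (hY : G.adjMatrix ℂ *ᵥ Y = μ • Y) :
    ∃ X : V × ℕ → ℂ, X ≠ 0 ∧ ∀ u, aPoly (hEdges G k) X u = μ * X u ^ (k - 1) := by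
  have hn : 0 < k / 2 := by obtain ⟨m, rfl⟩ := hk; omega
  have hk1 : k - 1 = (k / 2 - 1) + k / 2 := by obtain ⟨m, rfl⟩ := hk; omega
  choose g hg using fun v => IsAlgClosed.exists_pow_nat_eq (Y v) hn
  refine ⟨fun p => if p.2 < k / 2 then g p.1 else 0, ?_, ?_⟩
  · obtain ⟨v, hv⟩ := Function.ne_iff.1 hY0
    intro h
    have hgv : g v = 0 := by simpa [hn] using congrFun h (v, 0)
    exact hv (by rw [← hg v, hgv, zero_pow hn.ne']; rfl)
  rintro ⟨v, i⟩
  rcases lt_or_ge i (k / 2) with hi | hi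
  · have hprod : ∀ w, blowProd k (fun p => if p.2 < k / 2 then g p.1 else 0) w = Y w := by
      intro w
      rw [blowProd, prod_congr rfl fun j hj => if_pos (mem_range.1 hj)]
      simp only [prod_const, card_range, hg]
    have hprod_erase : ∏ j ∈ (range (k / 2)).erase i,
        (if j < k / 2 then g v else 0) = g v ^ (k / 2 - 1) := by
      rw [prod_congr rfl fun j hj => if_pos (mem_range.1 (mem_of_mem_erase hj)), prod_const,
        card_erase_of_mem (mem_range.2 hi), card_range]
    have hYv : ∑ w ∈ G.neighborFinset v, Y w = μ * Y v := by
      simpa [SimpleGraph.adjMatrix_mulVec_apply] using congrFun hY v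
    rw [aPoly_hEdges G _ v hi]
    simp only [hprod, hprod_erase, hYv, hi, if_true, ← hg v, hk1, pow_add]
    ring
  · rw [aPoly_hEdges_of_le G _ v hi]
    simp [hi.not_gt, zero_pow (show k - 1 ≠ 0 by obtain ⟨m, rfl⟩ := hk; omega)]

theorem mul_pow_eq_blowProd_mul_of_aPoly_hEdges_eq {lam : ℂ} {X : V × ℕ → ℂ}
    (hE : ∀ u, aPoly (hEdges G k) X u = lam * X u ^ (k - 1)) (v : V) {i : ℕ} (hi : i < k / 2) :
    lam * X (v, i) ^ k = blowProd k X v * ∑ w ∈ G.neighborFinset v, blowProd k X w := by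
  have h := hE (v, i)
  rw [aPoly_hEdges G X v hi] at h
  calc lam * X (v, i) ^ k = lam * X (v, i) ^ (k - 1) * X (v, i) := by
        rw [mul_assoc, ← pow_succ, Nat.sub_add_cancel (by omega)]
    _ = X (v, i) * (∏ j ∈ (range (k / 2)).erase i, X (v, j)) *
          ∑ w ∈ G.neighborFinset v, blowProd k X w := by rw [← h]; ring
    _ = _ := by rw [blowProd, mul_prod_erase _ (fun j => X (v, j)) (mem_range.2 hi)]

theorem norm_mul_sq_blowProd_le (hk : Even k) (hk0 : 0 < k) {lam : ℂ} {X : V × ℕ → ℂ}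
    (hE : ∀ u, aPoly (hEdges G k) X u = lam * X u ^ (k - 1)) (v : V) :
    ‖lam‖ * ‖blowProd k X v‖ ^ 2 ≤
      ‖blowProd k X v‖ * ∑ w ∈ G.neighborFinset v, ‖blowProd k X w‖ := by
  set n := k / 2
  have hn : 0 < n := by obtain ⟨m, rfl⟩ := hk; omega
  set P := blowProd k X v
  set S := ∑ w ∈ G.neighborFinset v, blowProd k X w
  have hpow : (lam * P ^ 2) ^ n = (P * S) ^ n := by
    calc (lam * P ^ 2) ^ n = ∏ i ∈ range n, lam * X (v, i) ^ k := by
          rw [prod_mul_distrib, prod_const, card_range, prod_pow, ← blowProd, mul_pow, ← pow_mul,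
            show 2 * n = k by obtain ⟨m, rfl⟩ := hk; omega]
      _ = (P * S) ^ n := by
          rw [prod_congr rfl fun i hi => mul_pow_eq_blowProd_mul_of_aPoly_hEdges_eq G hE v
            (mem_range.1 hi), prod_const, card_range]
  have hnorm : ‖lam‖ * ‖P‖ ^ 2 = ‖P‖ * ‖S‖ := by
    have h := congrArg norm hpow
    simp only [norm_pow, norm_mul] at h
    exact (pow_left_inj₀ (by positivity) (by positivity) hn.ne').1 h
  rw [hnorm]
  exact mul_le_mul_of_nonneg_left (norm_sum_le _ _) (norm_nonneg _)

theorem norm_le_of_aPoly_hEdges_eq (hk : Even k) (hk0 : 0 < k) {lam : ℂ} {X : V × ℕ → ℂ}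
    (hX0 : X ≠ 0) (hE : ∀ u, aPoly (hEdges G k) X u = lam * X u ^ (k - 1)) {r : ℝ} (hr0 : 0 ≤ r)
    (hr : ∀ μ ∈ spectrum ℂ (G.adjMatrix ℂ), ‖μ‖ ≤ r) :
    ‖lam‖ ≤ r := by
  rcases eq_or_ne lam 0 with rfl | hlam
  · simpa using hr0
  obtain ⟨v, hv⟩ : ∃ v, blowProd k X v ≠ 0 := by
    obtain ⟨⟨v, i⟩, hvi⟩ := Function.ne_iff.1 hX0
    have hi : i < k / 2 := by
      by_contra! hi
      have h := hE (v, i)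
      rw [aPoly_hEdges_of_le G X v hi, eq_comm, mul_eq_zero, pow_eq_zero_iff] at h
      · exact h.elim hlam hvi
      · obtain ⟨m, rfl⟩ := hk; omega
    refine ⟨v, fun h => ?_⟩
    have h' := mul_pow_eq_blowProd_mul_of_aPoly_hEdges_eq G hE v hi
    rw [h, zero_mul, mul_eq_zero, pow_eq_zero_iff hk0.ne'] at h'
    exact h'.elim hlam hvi
  set y := fun v => ‖blowProd k X v‖
  have hpos : 0 < ∑ v, y v ^ 2 :=
    sum_pos' (fun _ _ => sq_nonneg _) ⟨v, mem_univ v, by positivity⟩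
  have h : ‖lam‖ * ∑ v, y v ^ 2 ≤ r * ∑ v, y v ^ 2 :=
    calc ‖lam‖ * ∑ v, y v ^ 2 ≤ ∑ v, y v * ∑ w ∈ G.neighborFinset v, y w := by
          rw [mul_sum]
          exact sum_le_sum fun v _ => norm_mul_sq_blowProd_le G hk hk0 hE v
      _ ≤ r * ∑ v, y v ^ 2 := G.sum_mul_sum_neighborFinset_le hr0 hr y
  exact le_of_mul_le_mul_right h hpos

theorem specRad_adjMatrix_eq_hSpecRad (hk : Even k) (hk0 : 0 < k) :
    specRad (G.adjMatrix ℝ) = hSpecRad (hEdges G k) k := by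
  rw [specRad, hSpecRad, G.map_ofReal_adjMatrix]
  apply csSup_eq_csSup_of_forall_exists_le
  · rintro _ ⟨μ, hμ, rfl⟩
    obtain ⟨Y, hY0, hY⟩ := mem_spectrum_iff_exists_mulVec_eq_smul_s14.1 hμ
    obtain ⟨X, hX0, hX⟩ := exists_aPoly_hEdges_eq_of_mulVec_eq G hk hk0 hY0 hY
    exact ⟨_, ⟨μ, X, hX0, hX, rfl⟩, le_rfl⟩
  · rintro _ ⟨lam, X, hX0, hX, rfl⟩
    have : Nonempty V := by
      obtain ⟨⟨v, _⟩, _⟩ := Function.ne_iff.1 hX0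
      exact ⟨v⟩
    obtain ⟨μ, hμ, hmax⟩ := Set.exists_max_image _ (‖·‖) (finite_spectrum _)
      (spectrum.nonempty_of_isAlgClosed_of_finiteDimensional ℂ (G.adjMatrix ℂ))
    exact ⟨‖μ‖, ⟨μ, hμ, rfl⟩, norm_le_of_aPoly_hEdges_eq G hk hk0 hX0 hX (norm_nonneg μ) hmax⟩

end Hypergraph

theorem stmt_14_general {V : Type*} [Fintype V] [DecidableEq V] (G : SimpleGraph V)
    [DecidableRel G.Adj] (k : ℕ) (hk : Even k) (hk4 : 4 ≤ k)
    (x : V → ℝ) (hx : ∀ v, 0 < x v) (ρ : ℝ) :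
    ((G.adjMatrix ℝ) *ᵥ x = ρ • x ↔
      ∀ u : V, ρ * (x u ^ ((2 : ℝ) / k)) ^ (k - 1) =
        ∑ v ∈ G.neighborFinset u,
          (x u ^ ((2 : ℝ) / k)) ^ (k / 2 - 1) * (x v ^ ((2 : ℝ) / k)) ^ (k / 2)) ∧
    specRad (G.adjMatrix ℝ) = hSpecRad (hEdges G k) k := by
  have hk0 : 0 < k := by omega
  refine ⟨?_, specRad_adjMatrix_eq_hSpecRad G hk hk0⟩
  have hroot : (fun u => (x u ^ ((2 : ℝ) / k)) ^ (k / 2)) = x := funext fun u => by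
    rw [← Real.rpow_natCast, ← Real.rpow_mul (hx u).le,
      Nat.cast_div_charZero (even_iff_two_dvd.1 hk), Nat.cast_ofNat,
      div_mul_div_cancel₀ (by positivity), div_self two_ne_zero, Real.rpow_one]
  have h := G.adjMatrix_mulVec_pow_eq_smul_iff hk hk0
    (fun u => Real.rpow_pos_of_pos (hx u) ((2 : ℝ) / k)) ρ
  rwa [hroot] at h

/-- For connected `G`, even `k ≥ 4` and a positive vector `x` on `V(G)`, with
`𝐱_𝐯 = x_v^{2/k}`: `x` is an eigenvector of `A(G)` for `ρ` iff `𝐱` satisfies the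
adjacency-tensor eigenvector equation of `G^{k,k/2}` for `ρ`; consequently
`ρ(A(G)) = ρ(𝒜(G^{k,k/2}))`. -/
theorem stmt_14 {V : Type*} [Fintype V] [DecidableEq V] (G : SimpleGraph V)
    [DecidableRel G.Adj] (hG : G.Connected) (k : ℕ) (hk : Even k) (hk4 : 4 ≤ k)
    (x : V → ℝ) (hx : ∀ v, 0 < x v) (ρ : ℝ) :
    ((G.adjMatrix ℝ) *ᵥ x = ρ • x ↔
      ∀ u : V, ρ * (x u ^ ((2 : ℝ) / k)) ^ (k - 1) =
        ∑ v ∈ G.neighborFinset u,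
          (x u ^ ((2 : ℝ) / k)) ^ (k / 2 - 1) * (x v ^ ((2 : ℝ) / k)) ^ (k / 2)) ∧
    specRad (G.adjMatrix ℝ) = hSpecRad (hEdges G k) k :=
  stmt_14_general G k hk hk4 x hx ρ
end

section
/- For every k-uniform hypergraph H that is a proper sub-hypergraph of a connected k-uniform hypergraph G (on the vertex set of G, possibly after adding isolated vertices), ρ(𝒜(H)) < ρ(𝒜(G)), where 𝒜 denotes the adjacency tensor and ρ the tensor spectral radius. -/
open Matrix

/-!
Let `x` be a unit eigenvector of `A(H)` for an eigenvalue of maximal modulus and `y = |x|`.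
As adjacency matrices are entrywise nonnegative and `A(H) ≤ A(G)` entrywise,
`ρ(H) = |xᵀ A(H) x| ≤ yᵀ A(H) y ≤ yᵀ A(G) y ≤ ρ(G)`, the last step being the Rayleigh bound
`ρ(G) • 1 - A(G) ⪰ 0`. If `ρ(H) = ρ(G)`, then `y` lies in the kernel of that positive
semidefinite matrix, so it is a nonnegative eigenvector of `A(G)`, hence positive since `G` is
connected; then an edge of `G` missing from `H` makes `yᵀ A(H) y < yᵀ A(G) y`.
-/

namespace Matrix

variable {n : Type*} [Fintype n]

theorem dotProduct_mulVec_eq_sum (M : Matrix n n ℝ) (x y : n → ℝ) :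
    x ⬝ᵥ M *ᵥ y = ∑ i, ∑ j, x i * M i j * y j := by
  simp only [dotProduct, mulVec, Finset.mul_sum, mul_assoc]

theorem abs_dotProduct_mulVec_le {M : Matrix n n ℝ} (hM : ∀ i j, 0 ≤ M i j) (x : n → ℝ) :
    |x ⬝ᵥ M *ᵥ x| ≤ |x| ⬝ᵥ M *ᵥ |x| := by
  simp only [dotProduct_mulVec_eq_sum, Pi.abs_apply]
  refine (Finset.abs_sum_le_sum_abs _ _).trans <| Finset.sum_le_sum fun i _ ↦
    (Finset.abs_sum_le_sum_abs _ _).trans_eq <| Finset.sum_congr rfl fun j _ ↦ ?_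
  rw [abs_mul, abs_mul, abs_of_nonneg (hM i j)]

theorem dotProduct_mulVec_le_of_le {A B : Matrix n n ℝ} (hBA : ∀ i j, B i j ≤ A i j)
    {y : n → ℝ} (hy : 0 ≤ y) : y ⬝ᵥ B *ᵥ y ≤ y ⬝ᵥ A *ᵥ y := by
  simp only [dotProduct_mulVec_eq_sum]
  exact Finset.sum_le_sum fun i _ ↦ Finset.sum_le_sum fun j _ ↦
    mul_le_mul_of_nonneg_right (mul_le_mul_of_nonneg_left (hBA i j) (hy i)) (hy j)

theorem dotProduct_mulVec_lt_of_le_of_lt {A B : Matrix n n ℝ} (hBA : ∀ i j, B i j ≤ A i j)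
    {a b : n} (hab : B a b < A a b) {y : n → ℝ} (hy : ∀ i, 0 < y i) :
    y ⬝ᵥ B *ᵥ y < y ⬝ᵥ A *ᵥ y := by
  simp only [dotProduct_mulVec_eq_sum]
  have hle (i j : n) : y i * B i j * y j ≤ y i * A i j * y j :=
    mul_le_mul_of_nonneg_right (mul_le_mul_of_nonneg_left (hBA i j) (hy i).le) (hy j).le
  refine Finset.sum_lt_sum (fun i _ ↦ Finset.sum_le_sum fun j _ ↦ hle i j)
    ⟨a, Finset.mem_univ a, Finset.sum_lt_sum (fun j _ ↦ hle a j) ⟨b, Finset.mem_univ b, ?_⟩⟩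
  exact mul_lt_mul_of_pos_right (mul_lt_mul_of_pos_left hab (hy a)) (hy b)

namespace IsHermitian

variable [DecidableEq n] {M : Matrix n n ℝ}

theorem spectrum_map_ofReal (hM : M.IsHermitian) :
    spectrum ℂ (M.map Complex.ofReal) = Set.range fun i ↦ (hM.eigenvalues i : ℂ) := by
  ext μ
  have hchar : (M.map Complex.ofReal).charpoly
      = ∏ i, (Polynomial.X - Polynomial.C (hM.eigenvalues i : ℂ)) := by
    rw [show M.map Complex.ofReal = M.map Complex.ofRealHom from rfl, charpoly_map,
      hM.charpoly_eq]
    simp [Polynomial.map_prod]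
  simp [mem_spectrum_iff_isRoot_charpoly, hchar, Polynomial.eval_prod,
    Finset.prod_eq_zero_iff, sub_eq_zero, eq_comm (a := μ)]

theorem specRad_eq_sSup (hM : M.IsHermitian) :
    specRad M = sSup (Set.range fun i ↦ |hM.eigenvalues i|) := by
  rw [specRad, hM.spectrum_map_ofReal]
  congr 1
  ext r
  simp [eq_comm]

theorem abs_eigenvalues_le_specRad (hM : M.IsHermitian) (i : n) :
    |hM.eigenvalues i| ≤ specRad M :=
  hM.specRad_eq_sSup ▸ le_csSup (Set.finite_range _).bddAbove ⟨i, rfl⟩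

theorem exists_abs_eigenvalues_eq_specRad [Nonempty n] (hM : M.IsHermitian) :
    ∃ i, |hM.eigenvalues i| = specRad M :=
  hM.specRad_eq_sSup ▸ (Set.range_nonempty _).csSup_mem (Set.finite_range _)

theorem posSemidef_smul_one_sub (hM : M.IsHermitian) {r : ℝ}
    (hr : ∀ i, hM.eigenvalues i ≤ r) : (r • 1 - M).PosSemidef := by
  set U := (hM.eigenvectorUnitary : Matrix n n ℝ)
  have hconj : r • 1 - M = U * diagonal (fun i ↦ r - hM.eigenvalues i) * Uᴴ := by
    have hdiag : diagonal (fun i ↦ r - hM.eigenvalues i)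
        = r • 1 - diagonal (RCLike.ofReal ∘ hM.eigenvalues) := by
      ext i j
      by_cases h : i = j <;> simp [h]
    conv_lhs => rw [hM.spectral_theorem, Unitary.conjStarAlgAut_apply]
    rw [hdiag, mul_sub, sub_mul, mul_smul_comm, mul_one, smul_mul_assoc,
      ← star_eq_conjTranspose, Unitary.mul_star_self_of_mem hM.eigenvectorUnitary.2]
  rw [hconj]
  exact (posSemidef_diagonal_iff.2 fun i ↦ sub_nonneg.2 (hr i)).mul_mul_conjTranspose_same U

theorem dotProduct_mulVec_le (hM : M.IsHermitian) {r : ℝ}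
    (hr : ∀ i, hM.eigenvalues i ≤ r) (x : n → ℝ) : x ⬝ᵥ M *ᵥ x ≤ r * (x ⬝ᵥ x) := by
  have := (hM.posSemidef_smul_one_sub hr).dotProduct_mulVec_nonneg x
  simpa [sub_mulVec, smul_mulVec, dotProduct_sub] using this

theorem mulVec_eq_smul_of_dotProduct_mulVec_eq (hM : M.IsHermitian) {r : ℝ}
    (hr : ∀ i, hM.eigenvalues i ≤ r) {x : n → ℝ} (hx : x ⬝ᵥ M *ᵥ x = r * (x ⬝ᵥ x)) :
    M *ᵥ x = r • x := by
  have := ((hM.posSemidef_smul_one_sub hr).dotProduct_mulVec_zero_iff x).1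
    (by simp [sub_mulVec, smul_mulVec, dotProduct_sub, hx])
  simpa [sub_mulVec, smul_mulVec, sub_eq_zero, eq_comm] using this

theorem exists_nonneg_specRad_le [Nonempty n] (hM : M.IsHermitian) (hM₀ : ∀ i j, 0 ≤ M i j) :
    ∃ y : n → ℝ, 0 ≤ y ∧ y ⬝ᵥ y = 1 ∧ specRad M ≤ y ⬝ᵥ M *ᵥ y := by
  obtain ⟨i, hi⟩ := hM.exists_abs_eigenvalues_eq_specRad
  set x : n → ℝ := ⇑(hM.eigenvectorBasis i)
  have hxx : x ⬝ᵥ x = 1 := by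
    have h := real_inner_self_eq_norm_sq (hM.eigenvectorBasis i)
    rwa [hM.eigenvectorBasis.orthonormal.1 i, one_pow, EuclideanSpace.inner_eq_star_dotProduct,
      star_trivial] at h
  refine ⟨|x|, abs_nonneg x, by simpa [dotProduct] using hxx, ?_⟩
  calc specRad M = |x ⬝ᵥ M *ᵥ x| := by
        rw [hM.mulVec_eigenvectorBasis, dotProduct_smul, hxx, smul_eq_mul, mul_one, hi]
    _ ≤ |x| ⬝ᵥ M *ᵥ |x| := abs_dotProduct_mulVec_le hM₀ x

end IsHermitian

end Matrix

namespace SimpleGraph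

variable {V : Type*} {G H : SimpleGraph V} [DecidableRel G.Adj] [DecidableRel H.Adj]

theorem adjMatrix_nonneg (i j : V) : (0 : ℝ) ≤ G.adjMatrix ℝ i j := by
  rw [adjMatrix_apply]
  split_ifs <;> norm_num

theorem adjMatrix_le_adjMatrix (h : H ≤ G) (i j : V) :
    H.adjMatrix ℝ i j ≤ G.adjMatrix ℝ i j := by
  by_cases hH : H.Adj i j
  · simp [hH, h hH]
  · simpa [hH] using G.adjMatrix_nonneg i j

variable [Fintype V]

theorem dotProduct_adjMatrix_mulVec_lt (h : H < G) {y : V → ℝ} (hy : ∀ i, 0 < y i) :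
    y ⬝ᵥ H.adjMatrix ℝ *ᵥ y < y ⬝ᵥ G.adjMatrix ℝ *ᵥ y := by
  obtain ⟨a, b, hG, hH⟩ : ∃ a b, G.Adj a b ∧ ¬H.Adj a b := by
    simpa [le_iff_adj] using h.not_ge
  have hab : H.adjMatrix ℝ a b < G.adjMatrix ℝ a b := by simp [hG, hH]
  exact dotProduct_mulVec_lt_of_le_of_lt (adjMatrix_le_adjMatrix h.le) hab hy

theorem Connected.pos_of_adjMatrix_mulVec_eq_smul (hG : G.Connected) {y : V → ℝ} (hy : 0 ≤ y)
    (hy₀ : y ≠ 0) {r : ℝ} (hyr : G.adjMatrix ℝ *ᵥ y = r • y) (i : V) : 0 < y i := by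
  have hstep {j k : V} (hjk : G.Adj j k) (hj : 0 < y j) : 0 < y k := by
    have hsum : y j ≤ r * y k := by
      rw [← smul_eq_mul, ← Pi.smul_apply, ← hyr, adjMatrix_mulVec_apply]
      exact Finset.single_le_sum (fun l _ ↦ hy l) ((mem_neighborFinset G k j).2 hjk.symm)
    refine lt_of_le_of_ne' (hy k) fun hk ↦ ?_
    rw [hk, mul_zero] at hsum
    linarith
  obtain ⟨j, hjpos⟩ : ∃ j, 0 < y j := by
    obtain ⟨j, hj⟩ := Function.ne_iff.1 hy₀
    exact ⟨j, lt_of_le_of_ne' (hy j) hj⟩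
  obtain ⟨w⟩ := hG.preconnected j i
  induction w with
  | nil => exact hjpos
  | cons hadj _ ih => exact ih (hstep hadj hjpos)

end SimpleGraph

/-- A proper subgraph `H` of a connected graph `G` (on the same vertex set, possibly
with isolated vertices) has strictly smaller adjacency spectral radius (the `k = 2`
case of the hypergraph statement). -/
theorem stmt_18 {V : Type*} [Fintype V] [DecidableEq V] (G H : SimpleGraph V)
    [DecidableRel G.Adj] [DecidableRel H.Adj]
    (hconn : G.Connected) (hsub : H ≤ G) (hne : H ≠ G) :
    specRad (H.adjMatrix ℝ) < specRad (G.adjMatrix ℝ) := by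
  have : Nonempty V := hconn.nonempty
  have hA := G.isHermitian_adjMatrix ℝ
  have hA_le (i : V) : hA.eigenvalues i ≤ specRad (G.adjMatrix ℝ) :=
    (le_abs_self _).trans (hA.abs_eigenvalues_le_specRad i)
  obtain ⟨y, hy, hyy, hBy⟩ :=
    (H.isHermitian_adjMatrix ℝ).exists_nonneg_specRad_le H.adjMatrix_nonneg
  have hyBA := dotProduct_mulVec_le_of_le (G.adjMatrix_le_adjMatrix hsub) hy
  have hyA := hA.dotProduct_mulVec_le hA_le y
  rw [hyy, mul_one] at hyA
  refine (hBy.trans (hyBA.trans hyA)).lt_of_ne fun heq ↦ ?_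
  have hAy : G.adjMatrix ℝ *ᵥ y = specRad (G.adjMatrix ℝ) • y :=
    hA.mulVec_eq_smul_of_dotProduct_mulVec_eq hA_le (by rw [hyy, mul_one]; linarith)
  have hy₀ : y ≠ 0 := by rintro rfl; simp at hyy
  have hlt := G.dotProduct_adjMatrix_mulVec_lt (lt_of_le_of_ne hsub hne)
    (hconn.pos_of_adjMatrix_mulVec_eq_smul hy hy₀ hAy)
  linarith
end

section
/- For each n ≥ 1, let β_n be the unique positive root of P_n(x) = x^{n+1} − (1 + x + x^2 + ... + x^{n-1}), and set α_n = β_n^{1/2} + β_n^{-1/2}. Then the sequence (α_n) is strictly increasing with α_1 = 2 and lim_{n→∞} α_n = sqrt(2 + sqrt 5). -/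
/-- For `n ≥ 1`, let `β n` be the unique positive root of
`P_n(x) = x^{n+1} - (1 + x + ⋯ + x^{n-1})` and `α n = β n ^ (1/2) + β n ^ (-1/2)`.
Then `α 1 = 2`, the sequence `(α n)` is strictly increasing (for `n ≥ 1`), and
`α n → √(2 + √5)`. -/
theorem stmt_19 (β : ℕ → ℝ) (hpos : ∀ n, 1 ≤ n → 0 < β n)
    (hroot : ∀ n, 1 ≤ n → (β n) ^ (n + 1) = ∑ i ∈ Finset.range n, (β n) ^ i) :
    (Real.sqrt (β 1) + (Real.sqrt (β 1))⁻¹ = 2) ∧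
    (∀ m n : ℕ, 1 ≤ m → m < n →
      Real.sqrt (β m) + (Real.sqrt (β m))⁻¹ < Real.sqrt (β n) + (Real.sqrt (β n))⁻¹) ∧
    Filter.Tendsto (fun n => Real.sqrt (β n) + (Real.sqrt (β n))⁻¹) Filter.atTop
      (nhds (Real.sqrt (2 + Real.sqrt 5))) := by
  have h5 : Real.sqrt 5 ^ 2 = 5 := Real.sq_sqrt (by norm_num)
  have h5nn : (0:ℝ) ≤ Real.sqrt 5 := Real.sqrt_nonneg 5
  have h5ge : (2:ℝ) ≤ Real.sqrt 5 := by nlinarith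
  set φ : ℝ := (1 + Real.sqrt 5)/2 with hφdef
  have hφ1 : (1:ℝ) < φ := by rw [hφdef]; nlinarith
  -- key polynomial identity
  have h2 : ∀ n, 1 ≤ n → (β n)^n * ((β n)^2 - β n - 1) = -1 := by
    intro n hn
    linear_combination (β n - 1) * hroot n hn + geom_sum_mul (β n) n
  -- inverse sum identity
  have hkey : ∀ n, 1 ≤ n → ∑ j ∈ Finset.range n, ((β n)⁻¹)^(j+2) = 1 := by
    intro n hn
    have hb := hpos n hn
    have hbne : (β n) ^ (n+1) ≠ 0 := by positivity
    have hmul : (∑ j ∈ Finset.range n, ((β n)⁻¹)^(j+2)) * (β n)^(n+1)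
        = 1 * (β n)^(n+1) := by
      rw [Finset.sum_mul, one_mul]
      have hterm : ∀ j ∈ Finset.range n,
          ((β n)⁻¹)^(j+2) * (β n)^(n+1) = (β n)^(n-1-j) := by
        intro j hj
        have hj' : j < n := Finset.mem_range.mp hj
        rw [inv_pow, inv_mul_eq_div, div_eq_iff (by positivity), ← pow_add]
        congr 1; omega
      rw [Finset.sum_congr rfl hterm, Finset.sum_range_reflect (fun i => (β n)^i) n]
      exact (hroot n hn).symm
    exact mul_right_cancel₀ hbne hmul
  -- β n ≥ 1
  have h1le : ∀ n, 1 ≤ n → 1 ≤ β n := by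
    intro n hn
    have hb := hpos n hn
    have hy : 0 < (β n)⁻¹ := inv_pos.2 hb
    have hle : ((β n)⁻¹)^(0+2) ≤ ∑ j ∈ Finset.range n, ((β n)⁻¹)^(j+2) :=
      Finset.single_le_sum (f := fun j => ((β n)⁻¹)^(j+2))
        (fun j _ => by positivity) (Finset.mem_range.2 (by omega))
    rw [hkey n hn] at hle
    have hy1 : (β n)⁻¹ ≤ 1 := by nlinarith
    have := mul_inv_cancel₀ (ne_of_gt hb)
    nlinarith [mul_le_mul_of_nonneg_left hy1 hb.le]
  -- strict monotonicity of β
  have hmono : ∀ m n : ℕ, 1 ≤ m → m < n → β m < β n := by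
    intro m n hm hmn
    have hn : 1 ≤ n := by omega
    by_contra hle
    push_neg at hle
    have hym : 0 < (β m)⁻¹ := inv_pos.2 (hpos m hm)
    have hinv : (β m)⁻¹ ≤ (β n)⁻¹ := inv_anti₀ (hpos n hn) hle
    have hsum1 : ∑ j ∈ Finset.range m, ((β m)⁻¹)^(j+2)
        < ∑ j ∈ Finset.range n, ((β m)⁻¹)^(j+2) := by
      apply Finset.sum_lt_sum_of_subset (Finset.range_subset_range.2 hmn.le)
        (i := m) (Finset.mem_range.2 hmn) (by simp) (by positivity)
      intro j _ _; positivity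
    have hsum2 : ∑ j ∈ Finset.range n, ((β m)⁻¹)^(j+2)
        ≤ ∑ j ∈ Finset.range n, ((β n)⁻¹)^(j+2) :=
      Finset.sum_le_sum fun j _ => pow_le_pow_left₀ hym.le hinv _
    rw [hkey m hm] at hsum1
    rw [hkey n hn] at hsum2
    linarith
  -- β 1 = 1
  have hβ1 : β 1 = 1 := by
    have h := hroot 1 le_rfl
    simp [Finset.sum_range_one] at h
    rcases h with h | h
    · exact h
    · nlinarith [hpos 1 le_rfl]
  -- β n < φ
  have hlt : ∀ n, 1 ≤ n → β n < φ := by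
    intro n hn
    have hb := hpos n hn
    have hbn : 0 < (β n)^n := pow_pos hb n
    have hneg : (β n)^2 - β n - 1 < 0 := by
      by_contra hge
      push_neg at hge
      nlinarith [h2 n hn]
    rw [hφdef]
    nlinarith [sq_nonneg (2 * β n - 1 - Real.sqrt 5)]
  have hb2 : 1 < β 2 := hβ1 ▸ hmono 1 2 le_rfl one_lt_two
  -- limit of β
  have hβlim : Filter.Tendsto β Filter.atTop (nhds φ) := by
    have hr0 : 0 ≤ (β 2)⁻¹ := by positivity
    have hr1 : (β 2)⁻¹ < 1 := inv_lt_one_of_one_lt₀ hb2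
    have hlow : Filter.Tendsto (fun n : ℕ => φ - ((β 2)⁻¹)^n) Filter.atTop (nhds φ) := by
      have := (tendsto_pow_atTop_nhds_zero_of_lt_one hr0 hr1)
      simpa using tendsto_const_nhds.sub this
    refine tendsto_of_tendsto_of_tendsto_of_le_of_le' hlow tendsto_const_nhds ?_ ?_
    · refine Filter.eventually_atTop.2 ⟨2, fun n hn => ?_⟩
      have hn1 : 1 ≤ n := by omega
      have hb := hpos n hn1
      have hb1 := h1le n hn1
      have hbge2 : β 2 ≤ β n := by
        rcases eq_or_lt_of_le hn with h | h
        · rw [h]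
        · exact (hmono 2 n one_le_two h).le
      have hbn : 0 < (β n)^n := pow_pos hb n
      have hb2n : 0 < (β 2)^n := pow_pos (by linarith) n
      have hbnle : (β 2)^n ≤ (β n)^n := pow_le_pow_left₀ (by linarith) hbge2 n
      have e1 : (φ - β n) * (β n + (Real.sqrt 5 - 1)/2) = -((β n)^2 - β n - 1) := by
        rw [hφdef]; linear_combination (1/4 : ℝ) * h5
      have hval : -((β n)^2 - β n - 1) = ((β n)^n)⁻¹ := by
        have h2n := h2 n hn1
        field_simp
        linarith
      have hbψ : 1 ≤ β n + (Real.sqrt 5 - 1)/2 := by linarith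
      have hφge : β n ≤ φ := (hlt n hn1).le
      have key : φ - β n ≤ ((β 2)⁻¹)^n := by
        calc φ - β n ≤ (φ - β n) * (β n + (Real.sqrt 5 - 1)/2) :=
              le_mul_of_one_le_right (by linarith) hbψ
          _ = ((β n)^n)⁻¹ := by rw [e1, hval]
          _ ≤ ((β 2)^n)⁻¹ := inv_anti₀ hb2n hbnle
          _ = ((β 2)⁻¹)^n := (inv_pow _ _).symm
      linarith
    · refine Filter.eventually_atTop.2 ⟨1, fun n hn => (hlt n hn).le⟩
  have hφpos : 0 < φ := by linarith
  have hsφ : 0 < Real.sqrt φ := Real.sqrt_pos.2 hφpos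
  have hsq : Real.sqrt φ ^ 2 = φ := Real.sq_sqrt hφpos.le
  -- increasing function fact
  have fmono : ∀ a b : ℝ, 1 ≤ a → a < b →
      Real.sqrt a + (Real.sqrt a)⁻¹ < Real.sqrt b + (Real.sqrt b)⁻¹ := by
    intro a b ha hab
    set s := Real.sqrt a
    set t := Real.sqrt b
    have hs1 : 1 ≤ s := by
      rw [show (1:ℝ) = Real.sqrt 1 from Real.sqrt_one.symm]
      exact Real.sqrt_le_sqrt ha
    have hst : s < t := Real.sqrt_lt_sqrt (by linarith) hab
    have hspos : 0 < s := by linarith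
    have htpos : 0 < t := by linarith
    have hst1 : 1 < s * t := by nlinarith
    have expand : (t + t⁻¹) - (s + s⁻¹) = (t - s) * (s * t - 1) / (s * t) := by
      field_simp
      ring
    have : 0 < (t - s) * (s * t - 1) / (s * t) :=
      div_pos (mul_pos (by linarith) (by linarith)) (by positivity)
    linarith [expand ▸ this]
  refine ⟨?_, ?_, ?_⟩
  · rw [hβ1, Real.sqrt_one]; norm_num
  · intro m n hm hmn
    exact fmono _ _ (h1le m hm) (hmono m n hm hmn)
  · have hcont : ContinuousAt (fun x : ℝ => Real.sqrt x + (Real.sqrt x)⁻¹) φ := by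
      have h1 : ContinuousAt Real.sqrt φ := Real.continuous_sqrt.continuousAt
      exact h1.add (h1.inv₀ (ne_of_gt hsφ))
    have hT := hcont.tendsto.comp hβlim
    have heq : Real.sqrt (2 + Real.sqrt 5) = Real.sqrt φ + (Real.sqrt φ)⁻¹ := by
      have hφquad : φ^2 = φ + 1 := by
        rw [hφdef]; linear_combination (1/4 : ℝ) * h5
      have hv : (Real.sqrt φ + (Real.sqrt φ)⁻¹)^2 = 2 + Real.sqrt 5 := by
        have hinv2 : ((Real.sqrt φ)⁻¹)^2 = φ⁻¹ := by rw [inv_pow, hsq]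
        have hexp : (Real.sqrt φ + (Real.sqrt φ)⁻¹)^2 = φ + 2 + φ⁻¹ := by
          have hc := mul_inv_cancel₀ (ne_of_gt hsφ)
          nlinarith [hsq, hinv2]
        rw [hexp]
        have hinv : φ⁻¹ = φ - 1 := by
          field_simp
          linarith [hφquad]
        rw [hinv, hφdef]
        ring
      rw [← hv, Real.sqrt_sq (by positivity)]
    rw [heq]
    exact hT
end
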